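/- arXiv:2410.23777 — 9 statements merged into one kernel-verified Lean document; each statement's English description precedes it below -/
import Mathlib

section
/- Let f : ℝ → ℝ be continuous with f(x) > 0 for all x > 0, let R ∈ (-1,1) and M > 0, and let U be a C² solution of the model ODE (1-r²)·U''(r) - 2r·U'(r) + f(U(r)) = 0 on an interval I ⊆ (-1,1) containing R, with U(R) = M, U'(R) = 0 and U > 0 on I. Then U'(r) > 0 for every r ∈ I with r < R, and U'(r) < 0 for every r ∈ I with r > R. -/
open Set

/-! The flux `(1 - r²) U'(r)` satisfies `((1 - r²) U')' = -f(U) < 0`, so it is strictly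
decreasing on `I`; it vanishes at `R`, and `1 - r² > 0` on `(-1, 1)` transfers its sign to `U'`. -/

theorem HasDerivWithinAt.one_sub_sq_mul {g : ℝ → ℝ} {g' r : ℝ} {s : Set ℝ}
    (hg : HasDerivWithinAt g g' s r) :
    HasDerivWithinAt (fun x => (1 - x ^ 2) * g x) ((1 - r ^ 2) * g' - 2 * r * g r) s r := by
  have hw : HasDerivWithinAt (fun x : ℝ => 1 - x ^ 2) (-(2 * r)) s r := by
    simpa using (hasDerivWithinAt_pow 2 r).const_sub 1
  exact (hw.mul hg).congr_deriv (by ring)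

theorem strictAntiOn_one_sub_sq_mul_of_modelODE {f U U' U'' : ℝ → ℝ} {I : Set ℝ}
    (hIord : I.OrdConnected)
    (hU' : ∀ r ∈ I, HasDerivWithinAt U' (U'' r) I r)
    (hODE : ∀ r ∈ I, (1 - r ^ 2) * U'' r - 2 * r * U' r + f (U r) = 0)
    (hfU : ∀ r ∈ I, 0 < f (U r)) :
    StrictAntiOn (fun r => (1 - r ^ 2) * U' r) I := by
  have hflux : ∀ r ∈ I, HasDerivWithinAt (fun r => (1 - r ^ 2) * U' r) (-f (U r)) I r := by
    intro r hr
    exact (hU' r hr).one_sub_sq_mul.congr_deriv (by linarith [hODE r hr])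
  refine strictAntiOn_of_hasDerivWithinAt_neg hIord.convex
    (fun r hr => (hflux r hr).continuousWithinAt)
    (fun r hr => (hflux r (interior_subset hr)).mono interior_subset) ?_
  intro r hr
  exact neg_neg_of_pos (hfU r (interior_subset hr))

theorem one_sub_sq_pos_of_mem_Ioo {r : ℝ} (hr : r ∈ Ioo (-1 : ℝ) 1) : 0 < 1 - r ^ 2 := by
  nlinarith [hr.1, hr.2]

theorem stmt_2_general (f : ℝ → ℝ) (hfpos : ∀ x : ℝ, 0 < x → 0 < f x)
    (R : ℝ)
    (I : Set ℝ) (hI : I ⊆ Ioo (-1 : ℝ) 1) (hIord : I.OrdConnected) (hRI : R ∈ I)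
    (U U' U'' : ℝ → ℝ)
    (hU' : ∀ r ∈ I, HasDerivWithinAt U' (U'' r) I r)
    (hODE : ∀ r ∈ I, (1 - r ^ 2) * U'' r - 2 * r * U' r + f (U r) = 0)
    (hU'R : U' R = 0)
    (hUpos : ∀ r ∈ I, 0 < U r) :
    (∀ r ∈ I, r < R → 0 < U' r) ∧ (∀ r ∈ I, R < r → U' r < 0) := by
  have hanti := strictAntiOn_one_sub_sq_mul_of_modelODE hIord hU' hODE
    fun r hr => hfpos _ (hUpos r hr)
  have hfluxR : (1 - R ^ 2) * U' R = 0 := by rw [hU'R, mul_zero]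
  constructor
  · intro r hr hrR
    have hflux : 0 < (1 - r ^ 2) * U' r := hfluxR ▸ hanti hr hRI hrR
    exact pos_of_mul_pos_right hflux (one_sub_sq_pos_of_mem_Ioo (hI hr)).le
  · intro r hr hRr
    have hflux : (1 - r ^ 2) * U' r < 0 := hfluxR ▸ hanti hRI hr hRr
    exact neg_of_mul_neg_right hflux (one_sub_sq_pos_of_mem_Ioo (hI hr)).le

/-- Let `f : ℝ → ℝ` be continuous with `f(x) > 0` for all `x > 0`, let
`R ∈ (-1,1)` and `M > 0`, and let `U` be a C² solution of the model ODE
`(1-r²)·U''(r) - 2r·U'(r) + f(U(r)) = 0` on an interval `I ⊆ (-1,1)` containing `R`, with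
`U(R) = M`, `U'(R) = 0` and `U > 0` on `I`. Then `U'(r) > 0` for every `r ∈ I` with `r < R`,
and `U'(r) < 0` for every `r ∈ I` with `r > R`. -/
theorem stmt_2 (f : ℝ → ℝ) (hf : Continuous f) (hfpos : ∀ x : ℝ, 0 < x → 0 < f x)
    (R M : ℝ) (hR : R ∈ Ioo (-1 : ℝ) 1) (hM : 0 < M)
    (I : Set ℝ) (hI : I ⊆ Ioo (-1 : ℝ) 1) (hIord : I.OrdConnected) (hRI : R ∈ I)
    (U U' U'' : ℝ → ℝ)
    (hU : ∀ r ∈ I, HasDerivWithinAt U (U' r) I r)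
    (hU' : ∀ r ∈ I, HasDerivWithinAt U' (U'' r) I r)
    (hU''cont : ContinuousOn U'' I)
    (hODE : ∀ r ∈ I, (1 - r ^ 2) * U'' r - 2 * r * U' r + f (U r) = 0)
    (hUR : U R = M) (hU'R : U' R = 0)
    (hUpos : ∀ r ∈ I, 0 < U r) :
    (∀ r ∈ I, r < R → 0 < U' r) ∧ (∀ r ∈ I, R < r → U' r < 0) :=
  stmt_2_general f hfpos R I hI hIord hRI U U' U'' hU' hODE hU'R hUpos
end

section
/- Let f : ℝ → ℝ be C¹ with f(x) > 0 for all x > 0 and f(0) ≥ 0. Then for every R ∈ (-1,1) and every M > 0 there exist real numbers r₁, r₂ with -1 < r₁ < R < r₂ < 1 and a C² function U : [r₁,r₂] → ℝ satisfying the model ODE (1-r²)·U''(r) - 2r·U'(r) + f(U(r)) = 0 on [r₁,r₂], with U(R) = M, U'(R) = 0, U(r₁) = U(r₂) = 0 and U > 0 on (r₁,r₂); moreover U'(r₁) > 0 and U'(r₂) < 0. -/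
/-!
In the variables `(U, E)` with `E = (1 - r²) U'` the model ODE becomes a first-order system that,
on compact subintervals of `(-1, 1)` and after truncating `f` outside `[0, M]`, is globally
Lipschitz; Picard–Lindelöf on short steps then solves it on every `[R, b]` with `b < 1`.
From `(U, E)(R) = (M, 0)` the quantity `E` decreases (as `f ≥ 0`), hence so does `U`. If `U` stays
positive for a while, `E ≤ -κ < 0` afterwards, so `U' ≤ -κ / (2 (1 - r))`; as `log (1 - r) → -∞`
when `r → 1`, `U` reaches `0` at some `r₂ < 1`, where `E(r₂) < 0`. The left half is the right half
for `-R`, reflected by `r ↦ -r`, a symmetry of the system.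
-/

open Set
open scoped NNReal

section IntegralCurve

variable {E : Type*} [NormedAddCommGroup E] [NormedSpace ℝ E]

theorem IsIntegralCurveOn.piecewise_Icc {γ₁ γ₂ : ℝ → E} {v : ℝ → E → E} {a b c : ℝ}
    (hac : a ≤ c) (hcb : c ≤ b) (h₁ : IsIntegralCurveOn γ₁ v (Icc a c))
    (h₂ : IsIntegralCurveOn γ₂ v (Icc c b)) (hc : γ₁ c = γ₂ c) :
    IsIntegralCurveOn (fun t ↦ if t ≤ c then γ₁ t else γ₂ t) v (Icc a b) := by
  set γ := fun t ↦ if t ≤ c then γ₁ t else γ₂ t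
  have hγ₁ : EqOn γ γ₁ (Icc a c) := fun t ht ↦ if_pos ht.2
  have hγ₂ : EqOn γ γ₂ (Icc c b) := fun t ht ↦ by
    rcases ht.1.eq_or_lt with rfl | hlt
    · exact (if_pos le_rfl).trans hc
    · exact if_neg hlt.not_ge
  have left : ∀ t, HasDerivWithinAt γ (v t (γ t)) (Icc a c) t := fun t ↦ by
    by_cases ht : t ∈ Icc a c
    · rw [hγ₁ ht]; exact (h₁ t ht).congr hγ₁ (hγ₁ ht)
    · exact HasFDerivWithinAt.of_notMem_closure (by rwa [closure_Icc])
  have right : ∀ t, HasDerivWithinAt γ (v t (γ t)) (Icc c b) t := fun t ↦ by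
    by_cases ht : t ∈ Icc c b
    · rw [hγ₂ ht]; exact (h₂ t ht).congr hγ₂ (hγ₂ ht)
    · exact HasFDerivWithinAt.of_notMem_closure (by rwa [closure_Icc])
  intro t _
  rw [← Icc_union_Icc_eq_Icc hac hcb]
  exact (left t).union (right t)

theorem IsIntegralCurveOn.congr_vectorField {γ : ℝ → E} {v w : ℝ → E → E} {s : Set ℝ}
    (h : IsIntegralCurveOn γ v s) (hvw : ∀ t ∈ s, v t (γ t) = w t (γ t)) :
    IsIntegralCurveOn γ w s := fun t ht ↦ hvw t ht ▸ h t ht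

variable [CompleteSpace E]

theorem exists_isIntegralCurveOn_Icc_of_lipschitzWith_of_le {v : ℝ → E → E} {K : ℝ≥0}
    {a b : ℝ} (hab : a ≤ b) (hKab : K * (b - a) ≤ 1 / 2)
    (hv : ∀ t ∈ Icc a b, LipschitzWith K (v t)) (hcont : ∀ x, ContinuousOn (v · x) (Icc a b))
    (x₀ : E) : ∃ γ : ℝ → E, γ a = x₀ ∧ IsIntegralCurveOn γ v (Icc a b) := by
  obtain ⟨C, hC⟩ := isCompact_Icc.exists_bound_of_continuousOn (hcont x₀)
  have hC0 : 0 ≤ C := (norm_nonneg _).trans (hC a (left_mem_Icc.2 hab))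
  -- `ρ` is chosen so that `(C + K ρ) (b - a) ≤ ρ`, using `K (b - a) ≤ 1 / 2`
  set ρ : ℝ := 2 * C * (b - a) + 1
  have hρ : 0 ≤ ρ := by have := sub_nonneg.2 hab; positivity
  have hbound : ∀ t ∈ Icc a b, ∀ x ∈ Metric.closedBall x₀ ρ, ‖v t x‖ ≤ C + K * ρ := by
    intro t ht x hx
    calc ‖v t x‖ ≤ ‖v t x₀‖ + ‖v t x - v t x₀‖ := norm_le_norm_add_norm_sub' _ _
      _ ≤ C + K * ρ := by
        gcongr
        · exact hC t ht
        · rw [← dist_eq_norm]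
          exact ((hv t ht).dist_le_mul x x₀).trans (by gcongr; exact hx)
  have hpl : IsPicardLindelof v (tmin := a) (tmax := b) ⟨a, left_mem_Icc.2 hab⟩ x₀
      ⟨ρ, hρ⟩ 0 ⟨C + K * ρ, by positivity⟩ K :=
    { lipschitzOnWith := fun t ht ↦ (hv t ht).lipschitzOnWith
      continuousOn := fun x _ ↦ hcont x
      norm_le := hbound
      mul_max_le := by
        show (C + K * ρ) * max (b - a) (a - a) ≤ ρ - 0
        rw [sub_self, max_eq_left (sub_nonneg.2 hab)]
        nlinarith [sub_nonneg.2 hab] }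
  exact hpl.exists_eq_forall_mem_Icc_hasDerivWithinAt₀

theorem exists_isIntegralCurveOn_Icc_of_lipschitzWith {v : ℝ → E → E} {K : ℝ≥0}
    {a b : ℝ} (hab : a ≤ b) (hv : ∀ t ∈ Icc a b, LipschitzWith K (v t))
    (hcont : ∀ x, ContinuousOn (v · x) (Icc a b)) (x₀ : E) :
    ∃ γ : ℝ → E, γ a = x₀ ∧ IsIntegralCurveOn γ v (Icc a b) := by
  set τ : ℝ := 1 / (2 * (K + 1))
  have hτ : 0 < τ := by positivity
  have hKτ : K * τ ≤ 1 / 2 := by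
    rw [mul_one_div, div_le_div_iff₀ (by positivity) two_pos]; linarith
  suffices ∀ n : ℕ, ∀ c ∈ Icc a b, b - c ≤ n * τ → ∀ x : E,
      ∃ γ : ℝ → E, γ c = x ∧ IsIntegralCurveOn γ v (Icc c b) by
    obtain ⟨n, hn⟩ := exists_nat_ge ((b - a) / τ)
    exact this n a (left_mem_Icc.2 hab) ((div_le_iff₀ hτ).1 hn) x₀
  intro n
  induction n with
  | zero =>
    intro c hc hcb x
    have hbc : b - c ≤ 0 := by simpa using hcb
    refine exists_isIntegralCurveOn_Icc_of_lipschitzWith_of_le hc.2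
      (by nlinarith [K.coe_nonneg]) (fun t ht ↦ hv t ⟨hc.1.trans ht.1, ht.2⟩)
      (fun y ↦ (hcont y).mono (Icc_subset_Icc_left hc.1)) x
  | succ n ih =>
    intro c hc hcb x
    set d := min b (c + τ)
    have hcd : c ≤ d := le_min hc.2 (by linarith)
    have hdb : d ≤ b := min_le_left _ _
    obtain ⟨γ₁, hγ₁c, hγ₁⟩ := exists_isIntegralCurveOn_Icc_of_lipschitzWith_of_le hcd
      (by nlinarith [min_le_right b (c + τ)]) (fun t ht ↦ hv t ⟨hc.1.trans ht.1, ht.2.trans hdb⟩)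
      (fun y ↦ (hcont y).mono (Icc_subset_Icc hc.1 hdb)) x
    have hbd : b - d ≤ n * τ := by
      rcases min_choice b (c + τ) with h | h
      · rw [show d = b from h, sub_self]; positivity
      · rw [show d = c + τ from h]; push_cast at hcb; linarith
    obtain ⟨γ₂, hγ₂d, hγ₂⟩ := ih d ⟨hc.1.trans hcd, hdb⟩ hbd (γ₁ d)
    exact ⟨_, by simp [hcd, hγ₁c], hγ₁.piecewise_Icc hcd hdb hγ₂ hγ₂d.symm⟩

end IntegralCurve

-- The state is `(U, (1 - r²) U')`: the model ODE says exactly `((1 - r²) U')' = -f U`.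
noncomputable def modelField (g : ℝ → ℝ) (r : ℝ) (x : ℝ × ℝ) : ℝ × ℝ :=
  (x.2 / (1 - r ^ 2), -g x.1)

section ModelField

variable {g : ℝ → ℝ} {γ : ℝ → ℝ × ℝ} {a b : ℝ}

theorem one_sub_sq_pos_of_mem_Icc (ha : -1 < a) (hb : b < 1) {t : ℝ} (ht : t ∈ Icc a b) :
    0 < 1 - t ^ 2 := by
  nlinarith [ht.1, ht.2]

theorem exists_lipschitzWith_modelField {K : ℝ≥0} (hg : LipschitzWith K g) (ha : -1 < a)
    (hb : b < 1) : ∃ L, ∀ t ∈ Icc a b, LipschitzWith L (modelField g t) := by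
  have hcont : ContinuousOn (fun t : ℝ ↦ (1 - t ^ 2)⁻¹) (Icc a b) :=
    ContinuousOn.inv₀ (by fun_prop) fun t ht ↦ (one_sub_sq_pos_of_mem_Icc ha hb ht).ne'
  obtain ⟨C, hC⟩ := isCompact_Icc.exists_bound_of_continuousOn hcont
  refine ⟨max C.toNNReal K, fun t ht ↦ ?_⟩
  have h := ((lipschitzWith_smul (β := ℝ) (1 - t ^ 2)⁻¹).comp
    (LipschitzWith.prod_snd (α := ℝ) (β := ℝ))).prodMk (hg.comp LipschitzWith.prod_fst).neg
  have hfun : modelField g t = fun x ↦ ((1 - t ^ 2)⁻¹ • x.2, -g x.1) := by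
    funext x; simp [modelField, div_eq_inv_mul]
  rw [hfun]
  refine h.weaken ?_
  simp only [mul_one]
  gcongr
  rw [← NNReal.coe_le_coe, coe_nnnorm]
  exact (hC t ht).trans (Real.le_coe_toNNReal C)

theorem continuousOn_modelField (ha : -1 < a) (hb : b < 1) (x : ℝ × ℝ) :
    ContinuousOn (modelField g · x) (Icc a b) :=
  (continuousOn_const.div (continuousOn_const.sub (continuousOn_pow 2)) fun _ ht ↦
    (one_sub_sq_pos_of_mem_Icc ha hb ht).ne').prodMk continuousOn_const

theorem exists_isIntegralCurveOn_modelField {K : ℝ≥0} (hg : LipschitzWith K g) (ha : -1 < a)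
    (hab : a ≤ b) (hb : b < 1) (x₀ : ℝ × ℝ) :
    ∃ γ : ℝ → ℝ × ℝ, γ a = x₀ ∧ IsIntegralCurveOn γ (modelField g) (Icc a b) := by
  obtain ⟨L, hL⟩ := exists_lipschitzWith_modelField hg ha hb
  exact exists_isIntegralCurveOn_Icc_of_lipschitzWith hab hL (continuousOn_modelField ha hb) x₀

theorem IsIntegralCurveOn.exists_extend_modelField {K : ℝ≥0} (hg : LipschitzWith K g)
    (h : IsIntegralCurveOn γ (modelField g) (Icc a b)) (hb : -1 < b) (hab : a ≤ b) {c : ℝ}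
    (hbc : b ≤ c) (hc : c < 1) :
    ∃ γ' : ℝ → ℝ × ℝ, IsIntegralCurveOn γ' (modelField g) (Icc a c) ∧ EqOn γ' γ (Icc a b) := by
  obtain ⟨γ₂, hγ₂b, hγ₂⟩ := exists_isIntegralCurveOn_modelField hg hb hbc hc (γ b)
  exact ⟨_, h.piecewise_Icc hab hbc hγ₂ hγ₂b.symm, fun t ht ↦ if_pos ht.2⟩

theorem IsIntegralCurveOn.hasDerivWithinAt_modelField_fst {s : Set ℝ}
    (h : IsIntegralCurveOn γ (modelField g) s) {t : ℝ} (ht : t ∈ s) :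
    HasDerivWithinAt (fun t ↦ (γ t).1) ((γ t).2 / (1 - t ^ 2)) s t :=
  (h t ht).fst

theorem IsIntegralCurveOn.hasDerivWithinAt_modelField_snd {s : Set ℝ}
    (h : IsIntegralCurveOn γ (modelField g) s) {t : ℝ} (ht : t ∈ s) :
    HasDerivWithinAt (fun t ↦ (γ t).2) (-g (γ t).1) s t :=
  (h t ht).snd

theorem IsIntegralCurveOn.hasDerivWithinAt_modelField_velocity {s : Set ℝ}
    (h : IsIntegralCurveOn γ (modelField g) s) {t : ℝ} (ht : t ∈ s) (ht₁ : 1 - t ^ 2 ≠ 0) :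
    HasDerivWithinAt (fun t ↦ (γ t).2 / (1 - t ^ 2))
      ((2 * t * ((γ t).2 / (1 - t ^ 2)) - g (γ t).1) / (1 - t ^ 2)) s t := by
  have hden : HasDerivWithinAt (fun t : ℝ ↦ 1 - t ^ 2) (-(2 * t)) s t := by
    simpa using ((hasDerivAt_pow 2 t).const_sub 1).hasDerivWithinAt
  refine ((h.hasDerivWithinAt_modelField_snd ht).div hden ht₁).congr_deriv ?_
  field_simp
  ring

theorem IsIntegralCurveOn.modelField_comp_neg (h : IsIntegralCurveOn γ (modelField g) (Icc a b)) :
    IsIntegralCurveOn (fun t ↦ ((γ (-t)).1, -(γ (-t)).2)) (modelField g) (Icc (-b) (-a)) := by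
  intro t ht
  have hneg : MapsTo Neg.neg (Icc (-b) (-a)) (Icc a b) :=
    fun s hs ↦ ⟨le_neg.1 hs.2, neg_le.1 hs.1⟩
  have hγ := (h (-t) (hneg ht)).scomp t (hasDerivWithinAt_neg t _) hneg
  have hfst : HasDerivWithinAt (fun t ↦ (γ (-t)).1) _ (Icc (-b) (-a)) t := hγ.fst
  have hsnd : HasDerivWithinAt (fun t ↦ (γ (-t)).2) _ (Icc (-b) (-a)) t := hγ.snd
  refine (hfst.prodMk hsnd.neg).congr_deriv ?_
  simp [modelField, neg_div]

end ModelField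

section Monotonicity

variable {a b : ℝ} {f f' : ℝ → ℝ}

theorem antitoneOn_Icc_of_hasDerivWithinAt_nonpos
    (hf : ∀ t ∈ Icc a b, HasDerivWithinAt f (f' t) (Icc a b) t) (hf' : ∀ t ∈ Ioo a b, f' t ≤ 0) :
    AntitoneOn f (Icc a b) :=
  antitoneOn_of_hasDerivWithinAt_nonpos (convex_Icc a b) (fun t ht ↦ (hf t ht).continuousWithinAt)
    (fun t ht ↦ (hf t (interior_subset ht)).mono interior_subset) (by rwa [interior_Icc])

theorem strictAntiOn_Icc_of_hasDerivWithinAt_neg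
    (hf : ∀ t ∈ Icc a b, HasDerivWithinAt f (f' t) (Icc a b) t) (hf' : ∀ t ∈ Ioo a b, f' t < 0) :
    StrictAntiOn f (Icc a b) :=
  strictAntiOn_of_hasDerivWithinAt_neg (convex_Icc a b) (fun t ht ↦ (hf t ht).continuousWithinAt)
    (fun t ht ↦ (hf t (interior_subset ht)).mono interior_subset) (by rwa [interior_Icc])

end Monotonicity

namespace IsIntegralCurveOn

variable {g : ℝ → ℝ} {γ : ℝ → ℝ × ℝ} {a b : ℝ}

theorem antitoneOn_modelField_snd (h : IsIntegralCurveOn γ (modelField g) (Icc a b))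
    (hg : ∀ x, 0 ≤ g x) : AntitoneOn (fun t ↦ (γ t).2) (Icc a b) :=
  antitoneOn_Icc_of_hasDerivWithinAt_nonpos (fun _ ht ↦ h.hasDerivWithinAt_modelField_snd ht)
    fun _ _ ↦ neg_nonpos.2 (hg _)

theorem strictAntiOn_modelField_snd (h : IsIntegralCurveOn γ (modelField g) (Icc a b))
    (hg : ∀ t ∈ Ioo a b, 0 < g (γ t).1) : StrictAntiOn (fun t ↦ (γ t).2) (Icc a b) :=
  strictAntiOn_Icc_of_hasDerivWithinAt_neg (fun _ ht ↦ h.hasDerivWithinAt_modelField_snd ht)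
    fun t ht ↦ neg_neg_iff_pos.2 (hg t ht)

theorem antitoneOn_modelField_fst (h : IsIntegralCurveOn γ (modelField g) (Icc a b))
    (ha : -1 < a) (hb : b < 1) (hg : ∀ x, 0 ≤ g x) (ha₀ : (γ a).2 ≤ 0) :
    AntitoneOn (fun t ↦ (γ t).1) (Icc a b) :=
  antitoneOn_Icc_of_hasDerivWithinAt_nonpos (fun _ ht ↦ h.hasDerivWithinAt_modelField_fst ht)
    fun _ ht ↦ div_nonpos_of_nonpos_of_nonneg
      ((h.antitoneOn_modelField_snd hg (left_mem_Icc.2 (ht.1.le.trans ht.2.le))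
        (Ioo_subset_Icc_self ht) ht.1.le).trans ha₀)
      (one_sub_sq_pos_of_mem_Icc ha hb (Ioo_subset_Icc_self ht)).le

-- `(1 - t²)U' ≤ -κ` gives `U' ≤ -κ / (2 (1 - t))`, whose primitive `κ/2 · log (1 - t)`
-- tends to `-∞` as `t → 1`.
theorem modelField_fst_sub_log_le (h : IsIntegralCurveOn γ (modelField g) (Icc a b))
    (ha : -1 < a) (hb : b < 1) (hab : a ≤ b) {κ : ℝ} (hκ : 0 ≤ κ)
    (hsnd : ∀ t ∈ Icc a b, (γ t).2 ≤ -κ) :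
    (γ b).1 - κ / 2 * Real.log (1 - b) ≤ (γ a).1 - κ / 2 * Real.log (1 - a) := by
  have hderiv : ∀ t ∈ Icc a b, HasDerivWithinAt (fun t ↦ (γ t).1 - κ / 2 * Real.log (1 - t))
      ((γ t).2 / (1 - t ^ 2) + κ / 2 / (1 - t)) (Icc a b) t := by
    intro t ht
    have hlog : HasDerivWithinAt (fun t : ℝ ↦ Real.log (1 - t)) (-1 / (1 - t)) (Icc a b) t :=
      ((hasDerivAt_id' t).const_sub 1).hasDerivWithinAt.log (by linarith [ht.2])
    exact ((h.hasDerivWithinAt_modelField_fst ht).sub (hlog.const_mul (κ / 2))).congr_deriv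
      (by ring)
  refine antitoneOn_Icc_of_hasDerivWithinAt_nonpos hderiv (fun t ht ↦ ?_)
    (left_mem_Icc.2 hab) (right_mem_Icc.2 hab) hab
  have h1t : 0 < 1 - t := by linarith [ht.2]
  have h1t' : 0 < 1 + t := by linarith [ht.1]
  have hsq : 1 - t ^ 2 = (1 - t) * (1 + t) := by ring
  rw [hsq, div_add_div _ _ (by positivity) h1t.ne', div_nonpos_iff]
  right
  refine ⟨?_, by positivity⟩
  nlinarith [hsnd t (Ioo_subset_Icc_self ht), mul_nonneg hκ h1t.le]

end IsIntegralCurveOn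

theorem ContinuousOn.exists_first_zero {u : ℝ → ℝ} {a b : ℝ} (hu : ContinuousOn u (Icc a b))
    (ha : 0 < u a) {c : ℝ} (hc : c ∈ Icc a b) (hc₀ : u c ≤ 0) :
    ∃ r ∈ Ioc a b, u r = 0 ∧ ∀ t ∈ Ico a r, 0 < u t := by
  set S := Icc a b ∩ u ⁻¹' Iic 0
  have hSc : IsClosed S := hu.preimage_isClosed_of_isClosed isClosed_Icc isClosed_Iic
  have hSb : BddBelow S := bddBelow_Icc.mono inter_subset_left
  obtain ⟨⟨har, hrb⟩, hr₀⟩ : sInf S ∈ S := hSc.csInf_mem ⟨c, hc, hc₀⟩ hSb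
  have hpos : ∀ t ∈ Ico a (sInf S), 0 < u t := fun t ht ↦
    not_le.1 fun h ↦ ht.2.not_ge (csInf_le hSb ⟨⟨ht.1, ht.2.le.trans hrb⟩, h⟩)
  obtain ⟨t, ht, hut⟩ :=
    intermediate_value_Icc' har (hu.mono (Icc_subset_Icc_right hrb)) ⟨hr₀, ha.le⟩
  have htr : t = sInf S := le_antisymm ht.2 (csInf_le hSb ⟨⟨ht.1, ht.2.trans hrb⟩, hut.le⟩)
  have har' : a < sInf S := har.lt_of_ne fun h ↦ (h ▸ hr₀).not_gt ha
  exact ⟨sInf S, ⟨har', hrb⟩, htr ▸ hut, hpos⟩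

section FirstZero

variable {g : ℝ → ℝ} {K : ℝ≥0} {R : ℝ}

theorem exists_isIntegralCurveOn_modelField_fst_nonpos (hg : LipschitzWith K g)
    (hg₀ : ∀ x, 0 ≤ g x) (hgpos : ∀ x, 0 < x → 0 < g x) (hR : R ∈ Ioo (-1 : ℝ) 1) (M : ℝ) :
    ∃ b ∈ Ioo R 1, ∃ γ : ℝ → ℝ × ℝ, γ R = (M, 0) ∧
      IsIntegralCurveOn γ (modelField g) (Icc R b) ∧ ∃ t ∈ Icc R b, (γ t).1 ≤ 0 := by
  obtain ⟨hR₁, hR₂⟩ := hR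
  obtain ⟨b₁, hRb₁, hb₁⟩ := exists_between hR₂
  obtain ⟨γ₁, hγ₁R, hγ₁⟩ := exists_isIntegralCurveOn_modelField hg hR₁ hRb₁.le hb₁ (M, 0)
  by_cases hzero : ∃ t ∈ Icc R b₁, (γ₁ t).1 ≤ 0
  · exact ⟨b₁, ⟨hRb₁, hb₁⟩, γ₁, hγ₁R, hγ₁, hzero⟩
  push Not at hzero
  have hRmem : R ∈ Icc R b₁ := left_mem_Icc.2 hRb₁.le
  have hb₁mem : b₁ ∈ Icc R b₁ := right_mem_Icc.2 hRb₁.le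
  set κ := -(γ₁ b₁).2 with hκ_def
  have hκ : 0 < κ := by
    have := hγ₁.strictAntiOn_modelField_snd
      (fun t ht ↦ hgpos _ (hzero t (Ioo_subset_Icc_self ht))) hRmem hb₁mem hRb₁
    simp only [hγ₁R] at this
    linarith
  -- on `[b₁, b₂]` the barrier of `modelField_fst_sub_log_le` drops by exactly `(γ₁ b₁).1`
  set b₂ := 1 - (1 - b₁) * Real.exp (-(2 * (γ₁ b₁).1 / κ))
  have hexp : Real.exp (-(2 * (γ₁ b₁).1 / κ)) ≤ 1 :=
    Real.exp_le_one_iff.2 (neg_nonpos.2 (by have := hzero b₁ hb₁mem; positivity))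
  have hb₁b₂ : b₁ ≤ b₂ := by nlinarith [Real.exp_pos (-(2 * (γ₁ b₁).1 / κ))]
  have hb₂ : b₂ < 1 := by nlinarith [Real.exp_pos (-(2 * (γ₁ b₁).1 / κ))]
  have hlog : Real.log (1 - b₂) = Real.log (1 - b₁) - 2 * (γ₁ b₁).1 / κ := by
    rw [show 1 - b₂ = (1 - b₁) * Real.exp (-(2 * (γ₁ b₁).1 / κ)) by ring,
      Real.log_mul (by linarith) (Real.exp_pos _).ne', Real.log_exp]
    ring
  obtain ⟨γ, hγ, hγγ₁⟩ := hγ₁.exists_extend_modelField hg (by linarith) hRb₁.le hb₁b₂ hb₂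
  refine ⟨b₂, ⟨hRb₁.trans_le hb₁b₂, hb₂⟩, γ, (hγγ₁ hRmem).trans hγ₁R, hγ, b₂,
    right_mem_Icc.2 (hRb₁.le.trans hb₁b₂), ?_⟩
  have hγ' : IsIntegralCurveOn γ (modelField g) (Icc b₁ b₂) :=
    hγ.mono (Icc_subset_Icc_left hRb₁.le)
  have hsnd : ∀ t ∈ Icc b₁ b₂, (γ t).2 ≤ -κ := fun t ht ↦ by
    have := hγ'.antitoneOn_modelField_snd hg₀ (left_mem_Icc.2 hb₁b₂) ht ht.1
    simp only [hγγ₁ hb₁mem] at this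
    linarith
  have := hγ'.modelField_fst_sub_log_le (by linarith) hb₂ hb₁b₂ hκ.le hsnd
  rw [hlog, hγγ₁ hb₁mem] at this
  have hκM : κ / 2 * (2 * (γ₁ b₁).1 / κ) = (γ₁ b₁).1 := by field_simp
  nlinarith

theorem exists_isIntegralCurveOn_modelField_first_zero_of_lipschitzWith (hg : LipschitzWith K g)
    (hg₀ : ∀ x, 0 ≤ g x) (hgpos : ∀ x, 0 < x → 0 < g x) (hR : R ∈ Ioo (-1 : ℝ) 1) {M : ℝ}
    (hM : 0 < M) :
    ∃ r ∈ Ioo R 1, ∃ γ : ℝ → ℝ × ℝ, γ R = (M, 0) ∧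
      IsIntegralCurveOn γ (modelField g) (Icc R r) ∧ (γ r).1 = 0 ∧
      (∀ t ∈ Ico R r, 0 < (γ t).1) ∧ (γ r).2 < 0 := by
  obtain ⟨b, hb, γ, hγR, hγ, c, hc, hc₀⟩ :=
    exists_isIntegralCurveOn_modelField_fst_nonpos hg hg₀ hgpos hR M
  obtain ⟨r, hr, hr₀, hpos⟩ :=
    hγ.continuousOn.fst.exists_first_zero (by simpa [hγR] using hM) hc hc₀
  have hγr := hγ.mono (Icc_subset_Icc_right hr.2)
  refine ⟨r, ⟨hr.1, hr.2.trans_lt hb.2⟩, γ, hγR, hγr, hr₀, hpos, ?_⟩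
  have := hγr.strictAntiOn_modelField_snd
    (fun t ht ↦ hgpos _ (hpos t (Ioo_subset_Ico_self ht)))
    (left_mem_Icc.2 hr.1.le) (right_mem_Icc.2 hr.1.le) hr.1
  simpa [hγR] using this

end FirstZero

-- Truncating `f` outside `[0, M]` makes it globally Lipschitz, nonnegative, and changes nothing
-- along the solution, which stays in `[0, M]` up to its first zero.
theorem exists_isIntegralCurveOn_modelField_first_zero {f : ℝ → ℝ} (hf : LocallyLipschitz f)
    (hfpos : ∀ x, 0 < x → 0 < f x) (hf₀ : 0 ≤ f 0) {R : ℝ} (hR : R ∈ Ioo (-1 : ℝ) 1) {M : ℝ}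
    (hM : 0 < M) :
    ∃ r ∈ Ioo R 1, ∃ γ : ℝ → ℝ × ℝ, γ R = (M, 0) ∧
      IsIntegralCurveOn γ (modelField f) (Icc R r) ∧ (γ r).1 = 0 ∧
      (∀ t ∈ Ico R r, 0 < (γ t).1) ∧ (γ r).2 < 0 := by
  obtain ⟨K, hK⟩ := hf.locallyLipschitzOn.exists_lipschitzOnWith_of_compact
    (isCompact_Icc (a := 0) (b := M))
  set g : ℝ → ℝ := fun x ↦ f (projIcc 0 M hM.le x)
  have hg : LipschitzWith (K * 1) g := hK.to_restrict.comp (LipschitzWith.projIcc hM.le)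
  have hgpos : ∀ x, 0 < x → 0 < g x := fun x hx ↦
    hfpos _ (by simpa [g, coe_projIcc] using ⟨hM, hx⟩)
  have hg₀ : ∀ x, 0 ≤ g x := fun x ↦ by
    rcases (projIcc 0 M hM.le x).2.1.eq_or_lt with h | h
    · simp only [g, ← h, hf₀]
    · exact (hfpos _ h).le
  obtain ⟨r, hr, γ, hγR, hγ, hr₀, hpos, hneg⟩ :=
    exists_isIntegralCurveOn_modelField_first_zero_of_lipschitzWith hg hg₀ hgpos hR hM
  have hle : AntitoneOn (fun t ↦ (γ t).1) (Icc R r) :=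
    hγ.antitoneOn_modelField_fst hR.1 hr.2 hg₀ (by simp [hγR])
  have hmem : ∀ t ∈ Icc R r, (γ t).1 ∈ Icc 0 M := fun t ht ↦ by
    refine ⟨?_, by simpa [hγR] using hle (left_mem_Icc.2 hr.1.le) ht ht.1⟩
    rcases ht.2.eq_or_lt with rfl | htr
    · exact hr₀.ge
    · exact (hpos t ⟨ht.1, htr⟩).le
  refine ⟨r, hr, γ, hγR, hγ.congr_vectorField fun t ht ↦ ?_, hr₀, hpos, hneg⟩
  simp [modelField, g, projIcc_of_mem _ (hmem t ht)]

theorem exists_isIntegralCurveOn_modelField_arch {f : ℝ → ℝ} (hf : LocallyLipschitz f)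
    (hfpos : ∀ x, 0 < x → 0 < f x) (hf₀ : 0 ≤ f 0) {R : ℝ} (hR : R ∈ Ioo (-1 : ℝ) 1) {M : ℝ}
    (hM : 0 < M) :
    ∃ (r₁ r₂ : ℝ) (γ : ℝ → ℝ × ℝ), -1 < r₁ ∧ r₁ < R ∧ R < r₂ ∧ r₂ < 1 ∧
      IsIntegralCurveOn γ (modelField f) (Icc r₁ r₂) ∧ γ R = (M, 0) ∧
      (γ r₁).1 = 0 ∧ (γ r₂).1 = 0 ∧ (∀ t ∈ Ioo r₁ r₂, 0 < (γ t).1) ∧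
      0 < (γ r₁).2 ∧ (γ r₂).2 < 0 := by
  obtain ⟨r₂, hr₂, γ₂, hγ₂R, hγ₂, hγ₂r₂, hpos₂, hneg₂⟩ :=
    exists_isIntegralCurveOn_modelField_first_zero hf hfpos hf₀ hR hM
  obtain ⟨s, hs, γ₁, hγ₁R, hγ₁, hγ₁s, hpos₁, hneg₁⟩ :=
    exists_isIntegralCurveOn_modelField_first_zero hf hfpos hf₀ (R := -R)
      ⟨by linarith [hR.2], by linarith [hR.1]⟩ hM
  have hγ₁' := hγ₁.modelField_comp_neg
  rw [neg_neg] at hγ₁'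
  have hγ := hγ₁'.piecewise_Icc (by linarith [hs.1]) hr₂.1.le hγ₂ (by simp [hγ₁R, hγ₂R])
  have hsR : -s ≤ R := by linarith [hs.1]
  refine ⟨-s, r₂, _, by linarith [hs.2], by linarith [hs.1], hr₂.1, hr₂.2, hγ, ?_, ?_, ?_, ?_,
    ?_, ?_⟩
  · simp [hγ₁R]
  · simp [hsR, hγ₁s]
  · simp [hr₂.1.not_ge, hγ₂r₂]
  · intro t ht
    by_cases htR : t ≤ R
    · simpa [htR] using hpos₁ (-t) ⟨by linarith, by linarith [ht.1]⟩
    · simpa [htR] using hpos₂ t ⟨le_of_not_ge htR, ht.2⟩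
  · simpa [hsR] using hneg₁
  · simpa [hr₂.1.not_ge] using hneg₂

/-- Let `f : ℝ → ℝ` be C¹ with `f(x) > 0` for all `x > 0` and `f(0) ≥ 0`.
Then for every `R ∈ (-1,1)` and every `M > 0` there exist real numbers `r₁, r₂` with
`-1 < r₁ < R < r₂ < 1` and a C² function `U : [r₁,r₂] → ℝ` satisfying the model ODE
`(1-r²)·U''(r) - 2r·U'(r) + f(U(r)) = 0` on `[r₁,r₂]`, with `U(R) = M`, `U'(R) = 0`,
`U(r₁) = U(r₂) = 0` and `U > 0` on `(r₁,r₂)`; moreover `U'(r₁) > 0` and `U'(r₂) < 0`. -/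
theorem stmt_3 (f : ℝ → ℝ) (hf : ContDiff ℝ 1 f)
    (hfpos : ∀ x : ℝ, 0 < x → 0 < f x) (hf0 : 0 ≤ f 0) :
    ∀ R ∈ Ioo (-1 : ℝ) 1, ∀ M : ℝ, 0 < M →
      ∃ (r₁ r₂ : ℝ) (U U' U'' : ℝ → ℝ),
        -1 < r₁ ∧ r₁ < R ∧ R < r₂ ∧ r₂ < 1 ∧
        (∀ r ∈ Icc r₁ r₂, HasDerivWithinAt U (U' r) (Icc r₁ r₂) r) ∧
        (∀ r ∈ Icc r₁ r₂, HasDerivWithinAt U' (U'' r) (Icc r₁ r₂) r) ∧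
        ContinuousOn U'' (Icc r₁ r₂) ∧
        (∀ r ∈ Icc r₁ r₂, (1 - r ^ 2) * U'' r - 2 * r * U' r + f (U r) = 0) ∧
        U R = M ∧ U' R = 0 ∧ U r₁ = 0 ∧ U r₂ = 0 ∧
        (∀ r ∈ Ioo r₁ r₂, 0 < U r) ∧
        0 < U' r₁ ∧ U' r₂ < 0 := by
  intro R hR M hM
  obtain ⟨r₁, r₂, γ, hr₁, hr₁R, hRr₂, hr₂, hγ, hγR, hγr₁, hγr₂, hpos, hγr₁', hγr₂'⟩ :=
    exists_isIntegralCurveOn_modelField_arch hf.locallyLipschitz hfpos hf0 hR hM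
  have hden : ∀ r ∈ Icc r₁ r₂, 0 < 1 - r ^ 2 := fun r ↦ one_sub_sq_pos_of_mem_Icc hr₁ hr₂
  have hr₁mem : r₁ ∈ Icc r₁ r₂ := left_mem_Icc.2 (hr₁R.trans hRr₂).le
  have hr₂mem : r₂ ∈ Icc r₁ r₂ := right_mem_Icc.2 (hr₁R.trans hRr₂).le
  have hU' : ContinuousOn (fun r ↦ (γ r).2 / (1 - r ^ 2)) (Icc r₁ r₂) :=
    hγ.continuousOn.snd.div (by fun_prop) fun r hr ↦ (hden r hr).ne'
  refine ⟨r₁, r₂, fun r ↦ (γ r).1, fun r ↦ (γ r).2 / (1 - r ^ 2),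
    fun r ↦ (2 * r * ((γ r).2 / (1 - r ^ 2)) - f (γ r).1) / (1 - r ^ 2),
    hr₁, hr₁R, hRr₂, hr₂, fun r hr ↦ hγ.hasDerivWithinAt_modelField_fst hr,
    fun r hr ↦ hγ.hasDerivWithinAt_modelField_velocity hr (hden r hr).ne', ?_, fun r hr ↦ ?_,
    by simp [hγR], by simp [hγR], hγr₁, hγr₂, hpos, div_pos hγr₁' (hden r₁ hr₁mem),
    div_neg_of_neg_of_pos hγr₂' (hden r₂ hr₂mem)⟩
  · exact ((continuousOn_const.mul continuousOn_id).mul hU' |>.sub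
      (hf.continuous.comp_continuousOn hγ.continuousOn.fst)).div (by fun_prop)
      fun r hr ↦ (hden r hr).ne'
  · field_simp [(hden r hr).ne']
    ring
end

section
/- Let f : ℝ → ℝ be C¹ with f(x) > 0 for all x > 0 and f(0) ≥ 0, and fix M > 0. Suppose that for every R ∈ [0,1) we are given an arch solution with parameters (R,M), i.e. numbers r₁(R), r₂(R) and a function U_R as in the definition of arch solution. Then lim_{R → 1⁻} √(1 - r₂(R)²)·|U_R'(r₂(R))| = +∞. -/
/-!
Along the arch the flux `(1 - r²) U'` has derivative `-f(U) ≤ 0`, so it decreases from `0` at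
`R` to `F := (1 - r₂²) U'(r₂) ≤ 0`. Hence `U' ≥ F / (1 - r²) ≥ F / (1 - r)` on `[R, r₂]` when
`R ≥ 0`, and integrating from `R` to `r₂` gives `M ≤ F log(1 - r₂)`. Writing
`F log(1 - r₂) = (√(1 - r₂²) |U'(r₂)|) · (√(1 - r₂²) · (-log(1 - r₂)))`, the second factor tends
to `0⁺` as `r₂ → 1⁻`, which forces the first one to blow up.
-/

open Set

/-- Arch solution with parameters `(R, M)`: numbers `r₁ < R < r₂` in `(-1,1)` and a C²
function `U : [r₁,r₂] → ℝ` (with derivative data `U'`, `U''`) satisfying the model ODE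
`(1-r²)·U''(r) - 2r·U'(r) + f(U(r)) = 0` on `[r₁,r₂]`, with `U(R) = M`, `U'(R) = 0`,
`U(r₁) = U(r₂) = 0` and `U > 0` on `(r₁,r₂)`. -/
def IsArchSolution (f : ℝ → ℝ) (R M r₁ r₂ : ℝ) (U U' U'' : ℝ → ℝ) : Prop :=
  -1 < r₁ ∧ r₁ < R ∧ R < r₂ ∧ r₂ < 1 ∧
  (∀ r ∈ Set.Icc r₁ r₂, HasDerivWithinAt U (U' r) (Set.Icc r₁ r₂) r) ∧
  (∀ r ∈ Set.Icc r₁ r₂, HasDerivWithinAt U' (U'' r) (Set.Icc r₁ r₂) r) ∧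
  ContinuousOn U'' (Set.Icc r₁ r₂) ∧
  (∀ r ∈ Set.Icc r₁ r₂, (1 - r ^ 2) * U'' r - 2 * r * U' r + f (U r) = 0) ∧
  U R = M ∧ U' R = 0 ∧ U r₁ = 0 ∧ U r₂ = 0 ∧
  (∀ r ∈ Set.Ioo r₁ r₂, 0 < U r)

open Filter Topology

namespace IsArchSolution

variable {f : ℝ → ℝ} {R M r₁ r₂ : ℝ} {U U' U'' : ℝ → ℝ}

lemma nonneg (h : IsArchSolution f R M r₁ r₂ U U' U'') {r : ℝ} (hr : r ∈ Icc r₁ r₂) :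
    0 ≤ U r := by
  obtain ⟨-, -, -, -, -, -, -, -, -, -, hUr₁, hUr₂, hpos⟩ := h
  rcases eq_endpoints_or_mem_Ioo_of_mem_Icc hr with rfl | rfl | hr
  · exact hUr₁.ge
  · exact hUr₂.ge
  · exact (hpos r hr).le

lemma hasDerivWithinAt_flux (h : IsArchSolution f R M r₁ r₂ U U' U'') {r : ℝ}
    (hr : r ∈ Icc r₁ r₂) :
    HasDerivWithinAt (fun x => (1 - x ^ 2) * U' x) (-f (U r)) (Icc r₁ r₂) r := by
  obtain ⟨-, -, -, -, -, hU', -, hode, -⟩ := h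
  exact (((hasDerivAt_pow 2 r).const_sub 1).hasDerivWithinAt.mul (hU' r hr)).congr_deriv
    (by linear_combination hode r hr)

lemma antitoneOn_flux (h : IsArchSolution f R M r₁ r₂ U U' U'')
    (hf : ∀ x, 0 ≤ x → 0 ≤ f x) :
    AntitoneOn (fun x => (1 - x ^ 2) * U' x) (Icc r₁ r₂) :=
  antitoneOn_of_hasDerivWithinAt_nonpos (convex_Icc r₁ r₂)
    (fun _ hr => (h.hasDerivWithinAt_flux hr).continuousWithinAt)
    (fun _ hr => (h.hasDerivWithinAt_flux (interior_subset hr)).mono interior_subset)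
    (fun _ hr => neg_nonpos.2 (hf _ (h.nonneg (interior_subset hr))))

lemma flux_le_flux_right (h : IsArchSolution f R M r₁ r₂ U U' U'')
    (hf : ∀ x, 0 ≤ x → 0 ≤ f x) {r : ℝ} (hr : r ∈ Icc r₁ r₂) :
    (1 - r₂ ^ 2) * U' r₂ ≤ (1 - r ^ 2) * U' r :=
  h.antitoneOn_flux hf hr (right_mem_Icc.2 (hr.1.trans hr.2)) hr.2

lemma flux_right_nonpos (h : IsArchSolution f R M r₁ r₂ U U' U'')
    (hf : ∀ x, 0 ≤ x → 0 ≤ f x) :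
    (1 - r₂ ^ 2) * U' r₂ ≤ 0 := by
  obtain ⟨-, hr₁R, hRr₂, -, -, -, -, -, -, hU'R, -⟩ := id h
  simpa [hU'R] using h.flux_le_flux_right hf ⟨hr₁R.le, hRr₂.le⟩

lemma le_flux_mul_log (h : IsArchSolution f R M r₁ r₂ U U' U'')
    (hf : ∀ x, 0 ≤ x → 0 ≤ f x) (hR : 0 ≤ R) :
    M ≤ (1 - r₂ ^ 2) * U' r₂ * Real.log (1 - r₂) := by
  set F := (1 - r₂ ^ 2) * U' r₂
  have hF0 : F ≤ 0 := h.flux_right_nonpos hf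
  obtain ⟨hr₁, hr₁R, hRr₂, hr₂, hU, -, -, -, hUR, -, -, hUr₂, -⟩ := id h
  have hsub : Icc R r₂ ⊆ Icc r₁ r₂ := Icc_subset_Icc hr₁R.le le_rfl
  have hderiv : ∀ x ∈ Icc R r₂, HasDerivWithinAt (fun x => U x + F * Real.log (1 - x))
      (U' x - F / (1 - x)) (Icc R r₂) x := by
    intro x hx
    have hlog : HasDerivAt (fun y => Real.log (1 - y)) (-1 / (1 - x)) x :=
      ((hasDerivAt_id' x).const_sub 1).log (sub_ne_zero.2 (hx.2.trans_lt hr₂).ne')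
    exact (((hU x (hsub hx)).mono hsub).add (hlog.const_mul F).hasDerivWithinAt).congr_deriv
      (by ring)
  have hmono : MonotoneOn (fun x => U x + F * Real.log (1 - x)) (Icc R r₂) := by
    refine monotoneOn_of_hasDerivWithinAt_nonneg (convex_Icc R r₂)
      (fun x hx => (hderiv x hx).continuousWithinAt)
      (fun x hx => (hderiv x (interior_subset hx)).mono interior_subset) ?_
    rw [interior_Icc]
    intro x hx
    have hflux : F ≤ (1 - x ^ 2) * U' x := h.flux_le_flux_right hf (hsub ⟨hx.1.le, hx.2.le⟩)
    have hx1 : 0 < 1 - x := by linarith [hx.2]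
    -- `(1 - x) U' x = (1 - x²) U' x / (1 + x) ≥ F / (1 + x) ≥ F`
    have hUx : F ≤ (1 - x) * U' x := by nlinarith [hx.1]
    rw [sub_nonneg, div_le_iff₀ hx1]
    linarith
  have hlogR : 0 ≤ F * Real.log (1 - R) :=
    mul_nonneg_of_nonpos_of_nonpos hF0 (Real.log_nonpos (by linarith) (by linarith))
  have hends := hmono (left_mem_Icc.2 hRr₂.le) (right_mem_Icc.2 hRr₂.le) hRr₂.le
  simp only [hUR, hUr₂] at hends
  linarith

lemma le_gradNorm_mul (h : IsArchSolution f R M r₁ r₂ U U' U'')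
    (hf : ∀ x, 0 ≤ x → 0 ≤ f x) (hR : 0 ≤ R) :
    M ≤ √(1 - r₂ ^ 2) * |U' r₂| * (√(1 - r₂ ^ 2) * -Real.log (1 - r₂)) := by
  obtain ⟨-, -, hRr₂, hr₂1, -⟩ := id h
  have hr₂ : 0 < 1 - r₂ ^ 2 := by nlinarith
  have hU' : U' r₂ ≤ 0 := nonpos_of_mul_nonpos_right (h.flux_right_nonpos hf) hr₂
  calc M ≤ (1 - r₂ ^ 2) * U' r₂ * Real.log (1 - r₂) := h.le_flux_mul_log hf hR
    _ = √(1 - r₂ ^ 2) * |U' r₂| * (√(1 - r₂ ^ 2) * -Real.log (1 - r₂)) := by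
      rw [abs_of_nonpos hU']
      linear_combination -(U' r₂ * Real.log (1 - r₂)) * Real.mul_self_sqrt hr₂.le

end IsArchSolution

lemma tendsto_sqrt_one_sub_sq_mul_neg_log_one_sub :
    Tendsto (fun r : ℝ => √(1 - r ^ 2) * -Real.log (1 - r)) (𝓝[<] 1) (𝓝[>] 0) := by
  have hone_sub : Tendsto (fun r : ℝ => 1 - r) (𝓝[<] 1) (𝓝[>] 0) := by
    refine tendsto_nhdsWithin_iff.2 ⟨?_, ?_⟩
    · exact ((continuous_const.sub continuous_id).tendsto' 1 0 (sub_self 1)).mono_left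
        nhdsWithin_le_nhds
    · filter_upwards [self_mem_nhdsWithin] with r hr using sub_pos.2 hr.out
  have hlim : Tendsto (fun r : ℝ => -(√(1 + r) * (Real.log (1 - r) * (1 - r) ^ (1 / 2 : ℝ))))
      (𝓝[<] 1) (𝓝 0) := by
    have hsqrt : Tendsto (fun r : ℝ => √(1 + r)) (𝓝[<] 1) (𝓝 √(1 + 1)) :=
      ((continuous_const.add continuous_id).sqrt.tendsto 1).mono_left nhdsWithin_le_nhds
    simpa using (hsqrt.mul ((tendsto_log_mul_rpow_nhdsGT_zero one_half_pos).comp hone_sub)).neg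
  refine tendsto_nhdsWithin_iff.2 ⟨hlim.congr' ?_, ?_⟩
  · filter_upwards [self_mem_nhdsWithin] with r hr
    have h1r : 0 ≤ 1 - r := sub_nonneg.2 (le_of_lt hr)
    rw [← Real.sqrt_eq_rpow, show 1 - r ^ 2 = (1 + r) * (1 - r) by ring,
      Real.sqrt_mul' _ h1r]
    ring
  · filter_upwards [Ioo_mem_nhdsLT zero_lt_one] with r hr
    exact mul_pos (Real.sqrt_pos.2 (by nlinarith [hr.1, hr.2]))
      (neg_pos.2 (Real.log_neg (by linarith [hr.2]) (by linarith [hr.1])))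

lemma tendsto_atTop_of_const_le_mul {α : Type*} {l : Filter α} {T g : α → ℝ} {M : ℝ}
    (hM : 0 < M) (hg : Tendsto g l (𝓝[>] 0)) (hle : ∀ᶠ x in l, M ≤ T x * g x) :
    Tendsto T l atTop := by
  refine tendsto_atTop_mono' l ?_ (hg.inv_tendsto_nhdsGT_zero.const_mul_atTop hM)
  filter_upwards [hle, hg self_mem_nhdsWithin] with x hx hgx
  rwa [Pi.inv_apply, ← div_eq_mul_inv, div_le_iff₀ hgx]

theorem stmt_4_general (f : ℝ → ℝ) (hfpos : ∀ x : ℝ, 0 < x → 0 < f x) (hf0 : 0 ≤ f 0)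
    (M : ℝ) (hM : 0 < M)
    (r₁ r₂ : ℝ → ℝ) (U U' U'' : ℝ → ℝ → ℝ)
    (harch : ∀ R ∈ Ico (0 : ℝ) 1, IsArchSolution f R M (r₁ R) (r₂ R) (U R) (U' R) (U'' R)) :
    Filter.Tendsto (fun R => Real.sqrt (1 - (r₂ R) ^ 2) * |U' R (r₂ R)|)
      (nhdsWithin 1 (Iio (1 : ℝ))) Filter.atTop := by
  have hf : ∀ x, 0 ≤ x → 0 ≤ f x := fun x hx =>
    hx.eq_or_lt.elim (fun h => h ▸ hf0) (fun h => (hfpos x h).le)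
  have hnear : ∀ᶠ R in 𝓝[<] (1 : ℝ), R ∈ Ico 0 1 := Ico_mem_nhdsLT zero_lt_one
  have hr₂ : Tendsto r₂ (𝓝[<] 1) (𝓝[<] 1) := by
    refine tendsto_nhdsWithin_iff.2 ⟨tendsto_of_tendsto_of_tendsto_of_le_of_le'
      (tendsto_id.mono_left nhdsWithin_le_nhds) tendsto_const_nhds ?_ ?_, ?_⟩ <;>
    filter_upwards [hnear] with R hR
    exacts [(harch R hR).2.2.1.le, (harch R hR).2.2.2.1.le, (harch R hR).2.2.2.1]
  refine tendsto_atTop_of_const_le_mul hM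
    (tendsto_sqrt_one_sub_sq_mul_neg_log_one_sub.comp hr₂) ?_
  filter_upwards [hnear] with R hR
  exact (harch R hR).le_gradNorm_mul hf hR.1

/-- Let `f : ℝ → ℝ` be C¹ with `f(x) > 0` for all `x > 0` and `f(0) ≥ 0`,
and fix `M > 0`. Suppose that for every `R ∈ [0,1)` we are given an arch solution with
parameters `(R,M)`, i.e. numbers `r₁(R), r₂(R)` and a function `U_R` as in the definition
of arch solution. Then `lim_{R → 1⁻} √(1 - r₂(R)²)·|U_R'(r₂(R))| = +∞`. -/
theorem stmt_4 (f : ℝ → ℝ) (hf : ContDiff ℝ 1 f)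
    (hfpos : ∀ x : ℝ, 0 < x → 0 < f x) (hf0 : 0 ≤ f 0)
    (M : ℝ) (hM : 0 < M)
    (r₁ r₂ : ℝ → ℝ) (U U' U'' : ℝ → ℝ → ℝ)
    (harch : ∀ R ∈ Ico (0 : ℝ) 1, IsArchSolution f R M (r₁ R) (r₂ R) (U R) (U' R) (U'' R)) :
    Filter.Tendsto (fun R => Real.sqrt (1 - (r₂ R) ^ 2) * |U' R (r₂ R)|)
      (nhdsWithin 1 (Iio (1 : ℝ))) Filter.atTop :=
  stmt_4_general f hfpos hf0 M hM r₁ r₂ U U' U'' harch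
end

section
/- Let f : ℝ → ℝ satisfy condition (★), let R ∈ [0,1), M > 0, and let (r₁, r₂, U) be an arch solution with parameters (R,M). Let Z : [r₁,r₂] → ℝ be a C² solution of the linearized equation (1-r²)·Z''(r) - 2r·Z'(r) + f'(U(r))·Z(r) = 0 on [r₁,r₂] with Z(R) = 0 and Z'(R) > 0. Then Z(r) < 0 for all r ∈ (r₁, R) and Z(r) > 0 for all r ∈ (R, r₂). -/
/-!
Write `L y = (1 - r²) y'' - 2 r y' = ((1 - r²) y')'`. For the arch `U` and the linearized
solution `Z`, the weighted Wronskian `W = (1 - r²)(Z' U - Z U')` satisfies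
`W' = Z (f(U) - f'(U) U)`, which by (★) has the sign of `Z`. At `R` we have
`W(R) = (1 - R²) Z'(R) U(R) > 0`. If `t > R` were the first zero of `Z` after `R`, then `W`
would be nondecreasing on `[R, t]`, so `(1 - t²) Z'(t) U(t) = W(t) > 0` and `Z'(t) > 0`,
forcing `Z < 0` just before `t`. The left half follows from the right half applied to
`r ↦ -Z(-r)` and `r ↦ U(-r)`, since `L` is invariant under `r ↦ -r`.
-/

open Set

/-- Condition (★): `f` is C¹ on `[0,∞)`, `f ≥ 0` on `[0,∞)`, and `f(x) ≥ f'(x)·x` for all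
`x > 0`. -/
def CondStar (f : ℝ → ℝ) : Prop :=
  ContDiffOn ℝ 1 f (Set.Ici (0 : ℝ)) ∧
  (∀ x ∈ Set.Ici (0 : ℝ), 0 ≤ f x) ∧
  (∀ x : ℝ, 0 < x → derivWithin f (Set.Ici (0 : ℝ)) x * x ≤ f x)

open Filter Topology

section SignNearSimpleZero

variable {Z : ℝ → ℝ} {t d : ℝ}

lemma eventually_pos_nhdsGT_of_hasDerivAt_pos (h : HasDerivAt Z d t) (hd : 0 < d)
    (h0 : Z t = 0) : ∀ᶠ x in 𝓝[>] t, 0 < Z x := by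
  filter_upwards [nhdsWithin_le_nhds
    (eventually_nhdsWithin_sign_eq_of_deriv_pos (h.deriv ▸ hd) h0), self_mem_nhdsWithin]
    with x hsign hx
  rwa [sign_pos (sub_pos.2 hx), sign_eq_one_iff] at hsign

lemma eventually_neg_nhdsLT_of_hasDerivAt_pos (h : HasDerivAt Z d t) (hd : 0 < d)
    (h0 : Z t = 0) : ∀ᶠ x in 𝓝[<] t, Z x < 0 := by
  filter_upwards [nhdsWithin_le_nhds
    (eventually_nhdsWithin_sign_eq_of_deriv_pos (h.deriv ▸ hd) h0), self_mem_nhdsWithin]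
    with x hsign hx
  rwa [sign_neg (sub_neg.2 hx), sign_eq_neg_one_iff] at hsign

end SignNearSimpleZero

lemma exists_first_zero_of_pos_of_nonpos {Z : ℝ → ℝ} {c b : ℝ} (hZ : ContinuousOn Z (Icc c b))
    (hc : 0 < Z c) (hb : Z b ≤ 0) (hcb : c ≤ b) :
    ∃ t ∈ Ioc c b, Z t = 0 ∧ ∀ x ∈ Ico c t, 0 < Z x := by
  set K := Icc c b ∩ Z ⁻¹' Iic 0
  have hK : IsClosed K := hZ.preimage_isClosed_of_isClosed isClosed_Icc isClosed_Iic
  have hKbdd : BddBelow K := ⟨c, fun x hx => hx.1.1⟩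
  have htK : sInf K ∈ K := hK.csInf_mem ⟨b, ⟨hcb, le_rfl⟩, hb⟩ hKbdd
  set t := sInf K
  have hpos : ∀ x ∈ Ico c t, 0 < Z x := fun x hx =>
    not_le.1 fun hx0 => hx.2.not_ge (csInf_le hKbdd ⟨⟨hx.1, hx.2.le.trans htK.1.2⟩, hx0⟩)
  have hct : c < t := htK.1.1.lt_of_ne fun h => (hc.trans_le (h ▸ htK.2)).false
  obtain ⟨y, hy, hy0⟩ : 0 ∈ Z '' Icc c t :=
    intermediate_value_Icc' hct.le (hZ.mono (Icc_subset_Icc_right htK.1.2)) ⟨htK.2, hc.le⟩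
  have hyt : y = t := le_antisymm hy.2 (csInf_le hKbdd ⟨⟨hy.1, hy.2.trans htK.1.2⟩, hy0.le⟩)
  exact ⟨t, ⟨hct, htK.1.2⟩, hyt ▸ hy0, hpos⟩

lemma exists_first_zero_of_hasDerivAt_pos {Z : ℝ → ℝ} {a b d : ℝ}
    (hZ : ContinuousOn Z (Icc a b)) (hd : HasDerivAt Z d a) (hd0 : 0 < d) (ha : Z a = 0)
    (hb : Z b ≤ 0) (hab : a < b) :
    ∃ t ∈ Ioc a b, Z t = 0 ∧ ∀ x ∈ Ioo a t, 0 < Z x := by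
  obtain ⟨u, hau, hu⟩ := mem_nhdsGT_iff_exists_Ioo_subset.1
    (eventually_pos_nhdsGT_of_hasDerivAt_pos hd hd0 ha)
  obtain ⟨c, hac, hcu⟩ := exists_between (lt_min hau hab)
  have hZc : 0 < Z c := hu ⟨hac, hcu.trans_le (min_le_left _ _)⟩
  obtain ⟨t, htcb, hZt, hpos⟩ := exists_first_zero_of_pos_of_nonpos
    (hZ.mono (Icc_subset_Icc_left hac.le)) hZc hb (hcu.trans_le (min_le_right _ _)).le
  refine ⟨t, ⟨hac.trans htcb.1, htcb.2⟩, hZt, fun x hx => ?_⟩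
  rcases lt_or_ge x c with hxc | hcx
  · exact hu ⟨hx.1, hxc.trans (hcu.trans_le (min_le_left _ _))⟩
  · exact hpos x ⟨hcx, hx.2⟩

lemma forall_hasDerivAt_of_forall_hasDerivWithinAt_Icc {g g' : ℝ → ℝ} {a b : ℝ}
    (h : ∀ r ∈ Icc a b, HasDerivWithinAt g (g' r) (Icc a b) r) :
    ∀ r ∈ Ioo a b, HasDerivAt g (g' r) r := fun r hr =>
  (h r (Ioo_subset_Icc_self hr)).hasDerivAt (Icc_mem_nhds hr.1 hr.2)

def legendreWronskian (U U' Z Z' : ℝ → ℝ) (r : ℝ) : ℝ :=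
  (1 - r ^ 2) * (Z' r * U r - Z r * U' r)

lemma hasDerivAt_legendreWronskian {U U' Z Z' : ℝ → ℝ} {u'' z'' F q r : ℝ}
    (hU : HasDerivAt U (U' r) r) (hU' : HasDerivAt U' u'' r)
    (hZ : HasDerivAt Z (Z' r) r) (hZ' : HasDerivAt Z' z'' r)
    (hUeq : (1 - r ^ 2) * u'' - 2 * r * U' r + F = 0)
    (hZeq : (1 - r ^ 2) * z'' - 2 * r * Z' r + q * Z r = 0) :
    HasDerivAt (legendreWronskian U U' Z Z') (Z r * (F - q * U r)) r := by
  have h := ((hasDerivAt_pow 2 r).const_sub 1).mul ((hZ'.mul hU).sub (hZ.mul hU'))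
  refine h.congr_deriv ?_
  simp only [Pi.mul_apply, Pi.sub_apply]
  linear_combination U r * hZeq - Z r * hUeq

lemma HasDerivAt.comp_neg {g : ℝ → ℝ} {g' x : ℝ} (h : HasDerivAt g g' (-x)) :
    HasDerivAt (fun y => g (-y)) (-g') x := by
  simpa [Function.comp_def] using h.comp x (hasDerivAt_neg x)

section LegendreLinearization

variable {a b R : ℝ} {U U' U'' Z Z' Z'' F q : ℝ → ℝ}

theorem pos_of_legendre_linearization_right (ha : -1 ≤ a) (hb : b ≤ 1)
    (hU : ∀ r ∈ Ioo a b, HasDerivAt U (U' r) r) (hU' : ∀ r ∈ Ioo a b, HasDerivAt U' (U'' r) r)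
    (hZ : ∀ r ∈ Ioo a b, HasDerivAt Z (Z' r) r) (hZ' : ∀ r ∈ Ioo a b, HasDerivAt Z' (Z'' r) r)
    (hUeq : ∀ r ∈ Ioo a b, (1 - r ^ 2) * U'' r - 2 * r * U' r + F r = 0)
    (hZeq : ∀ r ∈ Ioo a b, (1 - r ^ 2) * Z'' r - 2 * r * Z' r + q r * Z r = 0)
    (hUpos : ∀ r ∈ Ioo a b, 0 < U r) (hqF : ∀ r ∈ Ioo a b, q r * U r ≤ F r)
    (hR : R ∈ Ioo a b) (hZR : Z R = 0) (hZ'R : 0 < Z' R) :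
    ∀ r ∈ Ioo R b, 0 < Z r := by
  intro s hs
  by_contra! hZs
  have hsub : Icc R s ⊆ Ioo a b := Icc_subset_Ioo hR.1 hs.2
  obtain ⟨t, ⟨hRt, hts⟩, hZt, hpos⟩ := exists_first_zero_of_hasDerivAt_pos
    (fun x hx => (hZ x (hsub hx)).continuousAt.continuousWithinAt) (hZ R hR) hZ'R hZR hZs hs.1
  have hRt_sub : Icc R t ⊆ Ioo a b := (Icc_subset_Icc_right hts).trans hsub
  have ht : t ∈ Ioo a b := hRt_sub ⟨hRt.le, le_rfl⟩
  have hweight : ∀ r ∈ Ioo a b, 0 < 1 - r ^ 2 := fun r hr => by nlinarith [hr.1, hr.2]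
  have hW : ∀ r ∈ Ioo a b,
      HasDerivAt (legendreWronskian U U' Z Z') (Z r * (F r - q r * U r)) r := fun r hr =>
    hasDerivAt_legendreWronskian (hU r hr) (hU' r hr) (hZ r hr) (hZ' r hr) (hUeq r hr)
      (hZeq r hr)
  have hmono : MonotoneOn (legendreWronskian U U' Z Z') (Icc R t) := by
    refine monotoneOn_of_hasDerivWithinAt_nonneg (f' := fun r => Z r * (F r - q r * U r))
      (convex_Icc R t)
      (fun x hx => (hW x (hRt_sub hx)).continuousAt.continuousWithinAt) (fun x hx => ?_)
      (fun x hx => ?_)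
    · rw [interior_Icc] at hx
      exact (hW x (hRt_sub (Ioo_subset_Icc_self hx))).hasDerivWithinAt
    · rw [interior_Icc] at hx
      exact mul_nonneg (hpos x hx).le (sub_nonneg.2 (hqF x (hRt_sub (Ioo_subset_Icc_self hx))))
  have hWR : 0 < legendreWronskian U U' Z Z' R := by
    simpa [legendreWronskian, hZR] using mul_pos (hweight R hR) (mul_pos hZ'R (hUpos R hR))
  have hWt : 0 < (1 - t ^ 2) * (Z' t * U t) := by
    simpa [legendreWronskian, hZt] using
      hWR.trans_le (hmono ⟨le_rfl, hRt.le⟩ ⟨hRt.le, le_rfl⟩ hRt.le)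
  have hZ't : 0 < Z' t :=
    pos_of_mul_pos_left (pos_of_mul_pos_right hWt (hweight t ht).le) (hUpos t ht).le
  obtain ⟨x, hneg, hx⟩ := ((eventually_neg_nhdsLT_of_hasDerivAt_pos (hZ t ht) hZ't hZt).and
    (Ioo_mem_nhdsLT hRt)).exists
  exact (hpos x hx).not_gt hneg

theorem neg_of_legendre_linearization_left (ha : -1 ≤ a) (hb : b ≤ 1)
    (hU : ∀ r ∈ Ioo a b, HasDerivAt U (U' r) r) (hU' : ∀ r ∈ Ioo a b, HasDerivAt U' (U'' r) r)
    (hZ : ∀ r ∈ Ioo a b, HasDerivAt Z (Z' r) r) (hZ' : ∀ r ∈ Ioo a b, HasDerivAt Z' (Z'' r) r)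
    (hUeq : ∀ r ∈ Ioo a b, (1 - r ^ 2) * U'' r - 2 * r * U' r + F r = 0)
    (hZeq : ∀ r ∈ Ioo a b, (1 - r ^ 2) * Z'' r - 2 * r * Z' r + q r * Z r = 0)
    (hUpos : ∀ r ∈ Ioo a b, 0 < U r) (hqF : ∀ r ∈ Ioo a b, q r * U r ≤ F r)
    (hR : R ∈ Ioo a b) (hZR : Z R = 0) (hZ'R : 0 < Z' R) :
    ∀ r ∈ Ioo a R, Z r < 0 := by
  have hneg : ∀ r ∈ Ioo (-b) (-a), -r ∈ Ioo a b := fun r hr =>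
    ⟨lt_neg.1 hr.2, neg_lt.1 hr.1⟩
  have hright := pos_of_legendre_linearization_right (a := -b) (b := -a) (R := -R)
    (U := fun r => U (-r)) (U' := fun r => -U' (-r)) (U'' := fun r => U'' (-r))
    (Z := fun r => -Z (-r)) (Z' := fun r => Z' (-r)) (Z'' := fun r => -Z'' (-r))
    (F := fun r => F (-r)) (q := fun r => q (-r)) (by linarith) (by linarith)
    (fun r hr => (hU (-r) (hneg r hr)).comp_neg)
    (fun r hr => by simpa using (hU' (-r) (hneg r hr)).comp_neg.fun_neg)
    (fun r hr => by simpa using (hZ (-r) (hneg r hr)).comp_neg.fun_neg)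
    (fun r hr => by simpa using (hZ' (-r) (hneg r hr)).comp_neg)
    (fun r hr => by linear_combination hUeq (-r) (hneg r hr))
    (fun r hr => by linear_combination -hZeq (-r) (hneg r hr))
    (fun r hr => hUpos (-r) (hneg r hr)) (fun r hr => hqF (-r) (hneg r hr))
    ⟨neg_lt_neg hR.2, neg_lt_neg hR.1⟩ (by simpa using hZR) (by simpa using hZ'R)
  intro r hr
  simpa using hright (-r) ⟨neg_lt_neg hr.2, neg_lt_neg hr.1⟩

end LegendreLinearization

theorem stmt_5_general (f : ℝ → ℝ) (hstar : CondStar f)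
    (R M : ℝ)
    (r₁ r₂ : ℝ) (U U' U'' : ℝ → ℝ)
    (harch : IsArchSolution f R M r₁ r₂ U U' U'')
    (Z Z' Z'' : ℝ → ℝ)
    (hZ : ∀ r ∈ Icc r₁ r₂, HasDerivWithinAt Z (Z' r) (Icc r₁ r₂) r)
    (hZ' : ∀ r ∈ Icc r₁ r₂, HasDerivWithinAt Z' (Z'' r) (Icc r₁ r₂) r)
    (hlin : ∀ r ∈ Icc r₁ r₂,
      (1 - r ^ 2) * Z'' r - 2 * r * Z' r + derivWithin f (Ici (0 : ℝ)) (U r) * Z r = 0)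
    (hZR : Z R = 0) (hZ'R : 0 < Z' R) :
    (∀ r ∈ Ioo r₁ R, Z r < 0) ∧ (∀ r ∈ Ioo R r₂, 0 < Z r) := by
  obtain ⟨h₁, h₁R, hR₂, h₂, hU, hU', -, hUeq, -, -, -, -, hUpos⟩ := harch
  have hqF : ∀ r ∈ Ioo r₁ r₂, derivWithin f (Ici 0) (U r) * U r ≤ f (U r) := fun r hr =>
    hstar.2.2 (U r) (hUpos r hr)
  have hUeq' := fun r (hr : r ∈ Ioo r₁ r₂) => hUeq r (Ioo_subset_Icc_self hr)
  have hlin' := fun r (hr : r ∈ Ioo r₁ r₂) => hlin r (Ioo_subset_Icc_self hr)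
  have hU := forall_hasDerivAt_of_forall_hasDerivWithinAt_Icc hU
  have hU' := forall_hasDerivAt_of_forall_hasDerivWithinAt_Icc hU'
  have hZ := forall_hasDerivAt_of_forall_hasDerivWithinAt_Icc hZ
  have hZ' := forall_hasDerivAt_of_forall_hasDerivWithinAt_Icc hZ'
  exact ⟨neg_of_legendre_linearization_left h₁.le h₂.le hU hU' hZ hZ' hUeq' hlin' hUpos hqF
      ⟨h₁R, hR₂⟩ hZR hZ'R,
    pos_of_legendre_linearization_right h₁.le h₂.le hU hU' hZ hZ' hUeq' hlin' hUpos hqF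
      ⟨h₁R, hR₂⟩ hZR hZ'R⟩

/-- Let `f` satisfy condition (★), let `R ∈ [0,1)`, `M > 0`, and let
`(r₁, r₂, U)` be an arch solution with parameters `(R,M)`. Let `Z : [r₁,r₂] → ℝ` be a C²
solution of the linearized equation `(1-r²)·Z''(r) - 2r·Z'(r) + f'(U(r))·Z(r) = 0` on
`[r₁,r₂]` with `Z(R) = 0` and `Z'(R) > 0`. Then `Z(r) < 0` for all `r ∈ (r₁, R)` and
`Z(r) > 0` for all `r ∈ (R, r₂)`. -/
theorem stmt_5 (f : ℝ → ℝ) (hstar : CondStar f)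
    (R M : ℝ) (hR : R ∈ Ico (0 : ℝ) 1) (hM : 0 < M)
    (r₁ r₂ : ℝ) (U U' U'' : ℝ → ℝ)
    (harch : IsArchSolution f R M r₁ r₂ U U' U'')
    (Z Z' Z'' : ℝ → ℝ)
    (hZ : ∀ r ∈ Icc r₁ r₂, HasDerivWithinAt Z (Z' r) (Icc r₁ r₂) r)
    (hZ' : ∀ r ∈ Icc r₁ r₂, HasDerivWithinAt Z' (Z'' r) (Icc r₁ r₂) r)
    (hZ''cont : ContinuousOn Z'' (Icc r₁ r₂))
    (hlin : ∀ r ∈ Icc r₁ r₂,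
      (1 - r ^ 2) * Z'' r - 2 * r * Z' r + derivWithin f (Ici (0 : ℝ)) (U r) * Z r = 0)
    (hZR : Z R = 0) (hZ'R : 0 < Z' R) :
    (∀ r ∈ Ioo r₁ R, Z r < 0) ∧ (∀ r ∈ Ioo R r₂, 0 < Z r) :=
  stmt_5_general f hstar R M r₁ r₂ U U' U'' harch Z Z' Z'' hZ hZ' hlin hZR hZ'R
end

section
/- Let f : ℝ → ℝ satisfy condition (★) and f(x) > 0 for all x > 0, and fix M > 0. Let R, R' ∈ [0,1) with R < R', let (r₁, r₂, U) be an arch solution with parameters (R,M) and (r₁', r₂', U') an arch solution with parameters (R',M). Then r₁ ≤ r₁' and r₂ ≤ r₂'. -/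
open Set

/-!
If `s₂ < r₂`, then `U - V` is negative at `R'` (there `V = M`, while `U < M` because
`(1 - r²)U'` has derivative `-f(U) < 0` and vanishes at `R`) and positive at `s₂`, so it has a first zero `σ ∈ (R', s₂)`, with `U ≤ V` on `[R', σ]`. Along the
model ODE the weighted Wronskian `W = (1 - r²)(U'V - UV')` has derivative `f(V)U - f(U)V`,
which is `≤ 0` where `0 < U ≤ V` because (★) makes `f(x)/x` nonincreasing. Hence
`W(σ) ≤ W(R') = (1 - R'²) U'(R') M < 0`, whereas `W(σ) = (1 - σ²) U(σ) (U' - V')(σ) ≥ 0` since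
`U - V` reaches `0` from below at `σ`. The left endpoints are compared by the reflection
`r ↦ -r`, which maps arch solutions to arch solutions.
-/

namespace CondStar

variable {f : ℝ → ℝ}

theorem antitoneOn_div (hf : CondStar f) : AntitoneOn (fun x => f x / x) (Ioi 0) := by
  obtain ⟨hC1, -, hderiv⟩ := hf
  have hf' : ∀ x ∈ Ioi (0 : ℝ), HasDerivAt f (derivWithin f (Ici 0) x) x := fun x hx =>
    (hC1.differentiableOn one_ne_zero x (mem_Ici.2 hx.le)).hasDerivWithinAt.hasDerivAt
      (Ici_mem_nhds hx)
  refine antitoneOn_of_hasDerivWithinAt_nonpos (convex_Ioi 0)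
    (fun x hx => ((hf' x hx).continuousAt.div continuousAt_id hx.ne').continuousWithinAt)
    (fun x hx => ?_) (fun x hx => ?_)
    (f' := fun x => (derivWithin f (Ici 0) x * x - f x * 1) / x ^ 2)
  · rw [interior_Ioi] at hx
    exact ((hf' x hx).div (hasDerivAt_id x) hx.ne').hasDerivWithinAt
  · rw [interior_Ioi] at hx
    exact div_nonpos_of_nonpos_of_nonneg (by linarith [hderiv x hx]) (sq_nonneg x)

theorem apply_mul_le_apply_mul (hf : CondStar f) {x y : ℝ} (hx : 0 < x) (hxy : x ≤ y) :
    f y * x ≤ f x * y := by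
  have hy : 0 < y := hx.trans_le hxy
  have := hf.antitoneOn_div (mem_Ioi.2 hx) (mem_Ioi.2 hy) hxy
  rwa [div_le_div_iff₀ hy hx] at this

end CondStar

theorem HasDerivAt.nonneg_of_le_left {g : ℝ → ℝ} {a c d : ℝ} (hg : HasDerivAt g d c)
    (hac : a < c) (hle : ∀ x ∈ Ioo a c, g x ≤ g c) : 0 ≤ d := by
  refine ge_of_tendsto (hasDerivAt_iff_tendsto_slope_left_right.mp hg).1 ?_
  filter_upwards [Ioo_mem_nhdsLT hac] with x hx
  rw [slope_def_field]
  exact div_nonneg_of_nonpos (sub_nonpos.2 (hle x hx)) (sub_nonpos.2 hx.2.le)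

theorem exists_first_zero_of_neg_of_pos {g : ℝ → ℝ} {a b : ℝ} (hab : a ≤ b)
    (hg : ContinuousOn g (Icc a b)) (ha : g a < 0) (hb : 0 < g b) :
    ∃ c ∈ Ioo a b, g c = 0 ∧ ∀ x ∈ Ico a c, g x < 0 := by
  set S := Icc a b ∩ g ⁻¹' Ici 0
  have hS : IsCompact S := isCompact_Icc.of_isClosed_subset
    (hg.preimage_isClosed_of_isClosed isClosed_Icc isClosed_Ici) inter_subset_left
  obtain ⟨c, ⟨hcab, hc0⟩, hcmin⟩ := hS.exists_isLeast ⟨b, right_mem_Icc.2 hab, hb.le⟩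
  have hneg : ∀ x ∈ Ico a c, g x < 0 := fun x hx => by
    by_contra! hx0
    exact hx.2.not_ge (hcmin ⟨⟨hx.1, hx.2.le.trans hcab.2⟩, hx0⟩)
  have hac : a < c := hcab.1.lt_of_ne fun h => (h ▸ ha).not_ge hc0
  obtain ⟨z, hz, hgz⟩ : (0 : ℝ) ∈ g '' Icc a c :=
    intermediate_value_Icc hac.le (hg.mono (Icc_subset_Icc_right hcab.2)) ⟨ha.le, hc0⟩
  have hc : g c = 0 := le_antisymm hz.2 (hcmin ⟨⟨hz.1, hz.2.trans hcab.2⟩, hgz.ge⟩) ▸ hgz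
  exact ⟨c, ⟨hac, hcab.2.lt_of_ne fun h => (h ▸ hb).ne' hc⟩, hc, hneg⟩

def weightedWronskian (U U' V V' : ℝ → ℝ) (r : ℝ) : ℝ :=
  (1 - r ^ 2) * (U' r * V r - U r * V' r)

theorem hasDerivAt_weightedWronskian {f U U' U'' V V' V'' : ℝ → ℝ} {r : ℝ}
    (hU : HasDerivAt U (U' r) r) (hU' : HasDerivAt U' (U'' r) r)
    (hV : HasDerivAt V (V' r) r) (hV' : HasDerivAt V' (V'' r) r)
    (hodeU : (1 - r ^ 2) * U'' r - 2 * r * U' r + f (U r) = 0)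
    (hodeV : (1 - r ^ 2) * V'' r - 2 * r * V' r + f (V r) = 0) :
    HasDerivAt (weightedWronskian U U' V V') (f (V r) * U r - f (U r) * V r) r := by
  have hw : HasDerivAt (fun x => 1 - x ^ 2) (-(2 * r)) r := by
    simpa using (hasDerivAt_pow 2 r).const_sub 1
  refine (hw.mul ((hU'.mul hV).sub (hU.mul hV'))).congr_deriv ?_
  simp only [Pi.sub_apply, Pi.mul_apply]
  linear_combination V r * hodeU - U r * hodeV

namespace IsArchSolution

variable {f : ℝ → ℝ} {R M r₁ r₂ : ℝ} {U U' U'' : ℝ → ℝ}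

theorem left_lt_apex (h : IsArchSolution f R M r₁ r₂ U U' U'') : r₁ < R := h.2.1

theorem apex_lt_right (h : IsArchSolution f R M r₁ r₂ U U' U'') : R < r₂ := h.2.2.1

theorem apex_mem (h : IsArchSolution f R M r₁ r₂ U U' U'') : R ∈ Ioo r₁ r₂ :=
  ⟨h.left_lt_apex, h.apex_lt_right⟩

theorem ode (h : IsArchSolution f R M r₁ r₂ U U' U'') {r : ℝ} (hr : r ∈ Ioo r₁ r₂) :
    (1 - r ^ 2) * U'' r - 2 * r * U' r + f (U r) = 0 :=
  h.2.2.2.2.2.2.2.1 r (Ioo_subset_Icc_self hr)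

theorem apply_apex (h : IsArchSolution f R M r₁ r₂ U U' U'') : U R = M := h.2.2.2.2.2.2.2.2.1

theorem deriv_apex (h : IsArchSolution f R M r₁ r₂ U U' U'') : U' R = 0 :=
  h.2.2.2.2.2.2.2.2.2.1

theorem apply_right (h : IsArchSolution f R M r₁ r₂ U U' U'') : U r₂ = 0 :=
  h.2.2.2.2.2.2.2.2.2.2.2.1

theorem pos (h : IsArchSolution f R M r₁ r₂ U U' U'') {r : ℝ} (hr : r ∈ Ioo r₁ r₂) : 0 < U r :=
  h.2.2.2.2.2.2.2.2.2.2.2.2 r hr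

theorem hasDerivAt (h : IsArchSolution f R M r₁ r₂ U U' U'') {r : ℝ} (hr : r ∈ Ioo r₁ r₂) :
    HasDerivAt U (U' r) r :=
  (h.2.2.2.2.1 r (Ioo_subset_Icc_self hr)).hasDerivAt (Icc_mem_nhds hr.1 hr.2)

theorem hasDerivAt_deriv (h : IsArchSolution f R M r₁ r₂ U U' U'') {r : ℝ}
    (hr : r ∈ Ioo r₁ r₂) : HasDerivAt U' (U'' r) r :=
  (h.2.2.2.2.2.1 r (Ioo_subset_Icc_self hr)).hasDerivAt (Icc_mem_nhds hr.1 hr.2)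

theorem continuousOn (h : IsArchSolution f R M r₁ r₂ U U' U'') : ContinuousOn U (Icc r₁ r₂) :=
  fun r hr => (h.2.2.2.2.1 r hr).continuousWithinAt

theorem continuousOn_deriv (h : IsArchSolution f R M r₁ r₂ U U' U'') :
    ContinuousOn U' (Icc r₁ r₂) :=
  fun r hr => (h.2.2.2.2.2.1 r hr).continuousWithinAt

theorem reflect (h : IsArchSolution f R M r₁ r₂ U U' U'') :
    IsArchSolution f (-R) M (-r₂) (-r₁) (fun r => U (-r)) (fun r => -U' (-r))
      (fun r => U'' (-r)) := by
  obtain ⟨h₁, h₁R, hR₂, h₂, hU, hU', hU'', hode, hUR, hU'R, hUr₁, hUr₂, hpos⟩ := h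
  have hmaps : MapsTo (fun r : ℝ => -r) (Icc (-r₂) (-r₁)) (Icc r₁ r₂) := fun r hr =>
    ⟨le_neg.2 hr.2, neg_le.2 hr.1⟩
  have hneg : ∀ r, HasDerivWithinAt (fun x : ℝ => -x) (-1) (Icc (-r₂) (-r₁)) r := fun r =>
    (hasDerivAt_neg r).hasDerivWithinAt
  refine ⟨by linarith, by linarith, by linarith, by linarith, fun r hr => ?_, fun r hr => ?_,
    hU''.comp continuous_neg.continuousOn hmaps, fun r hr => ?_, by simpa using hUR, by simp [hU'R],
    by simpa using hUr₂, by simpa using hUr₁, fun r hr => hpos (-r) ⟨lt_neg.2 hr.2, neg_lt.2 hr.1⟩⟩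
  · simpa [Function.comp_def] using (hU (-r) (hmaps hr)).scomp r (hneg r) hmaps
  · simpa [Function.comp_def, Pi.neg_def] using ((hU' (-r) (hmaps hr)).scomp r (hneg r) hmaps).neg
  · linear_combination (by simpa using hode (-r) (hmaps hr) :
      (1 - r ^ 2) * U'' (-r) + 2 * r * U' (-r) + f (U (-r)) = 0)

theorem one_sub_sq_pos (h : IsArchSolution f R M r₁ r₂ U U' U'') {r : ℝ}
    (hr : r ∈ Icc r₁ r₂) : 0 < 1 - r ^ 2 := by
  obtain ⟨h₁, -, -, h₂, -⟩ := h
  nlinarith [hr.1, hr.2]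

theorem height_pos (h : IsArchSolution f R M r₁ r₂ U U' U'') : 0 < M :=
  h.apply_apex ▸ h.pos h.apex_mem

theorem strictAntiOn_flux (h : IsArchSolution f R M r₁ r₂ U U' U'')
    (hf : ∀ x, 0 < x → 0 < f x) :
    StrictAntiOn (fun r => (1 - r ^ 2) * U' r) (Icc r₁ r₂) := by
  refine strictAntiOn_of_hasDerivWithinAt_neg (convex_Icc r₁ r₂)
    ((continuous_const.sub (continuous_pow 2)).continuousOn.mul h.continuousOn_deriv)
    (fun r hr => ?_) (fun r hr => ?_) (f' := fun r => -(2 * r) * U' r + (1 - r ^ 2) * U'' r)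
  · rw [interior_Icc] at hr
    have hw : HasDerivAt (fun x => 1 - x ^ 2) (-(2 * r)) r := by
      simpa using (hasDerivAt_pow 2 r).const_sub 1
    exact (hw.mul (h.hasDerivAt_deriv hr)).hasDerivWithinAt
  · rw [interior_Icc] at hr
    linarith [h.ode hr, hf _ (h.pos hr)]

theorem deriv_neg_of_mem_Ioc (h : IsArchSolution f R M r₁ r₂ U U' U'')
    (hf : ∀ x, 0 < x → 0 < f x) {r : ℝ} (hr : r ∈ Ioc R r₂) : U' r < 0 := by
  have hrmem : r ∈ Icc r₁ r₂ := ⟨h.left_lt_apex.le.trans hr.1.le, hr.2⟩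
  have hflux := h.strictAntiOn_flux hf (Ioo_subset_Icc_self h.apex_mem) hrmem hr.1
  simp only [h.deriv_apex, mul_zero] at hflux
  exact neg_of_mul_neg_right hflux (h.one_sub_sq_pos hrmem).le

theorem lt_height_of_mem_Ioc (h : IsArchSolution f R M r₁ r₂ U U' U'')
    (hf : ∀ x, 0 < x → 0 < f x) {r : ℝ} (hr : r ∈ Ioc R r₂) : U r < M := by
  have hanti : StrictAntiOn U (Icc R r₂) := by
    refine strictAntiOn_of_hasDerivWithinAt_neg (convex_Icc R r₂)
      (h.continuousOn.mono (Icc_subset_Icc_left h.left_lt_apex.le)) (fun x hx => ?_)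
      (fun x hx => ?_) (f' := U')
    · rw [interior_Icc] at hx
      exact (h.hasDerivAt ⟨h.left_lt_apex.trans hx.1, hx.2⟩).hasDerivWithinAt
    · rw [interior_Icc] at hx
      exact h.deriv_neg_of_mem_Ioc hf (Ioo_subset_Ioc_self hx)
  simpa [h.apply_apex] using
    hanti (left_mem_Icc.2 h.apex_lt_right.le) (Ioc_subset_Icc_self hr) hr.1

theorem antitoneOn_weightedWronskian {R' M' s₁ s₂ : ℝ} {V V' V'' : ℝ → ℝ} (hf : CondStar f)
    (hU : IsArchSolution f R M r₁ r₂ U U' U'') (hV : IsArchSolution f R' M' s₁ s₂ V V' V'')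
    {a b : ℝ} (hUab : Icc a b ⊆ Ioo r₁ r₂) (hVab : Icc a b ⊆ Ioo s₁ s₂)
    (hUV : ∀ x ∈ Icc a b, U x ≤ V x) :
    AntitoneOn (weightedWronskian U U' V V') (Icc a b) := by
  have hW : ∀ x ∈ Icc a b, HasDerivAt (weightedWronskian U U' V V')
      (f (V x) * U x - f (U x) * V x) x := fun x hx =>
    hasDerivAt_weightedWronskian (hU.hasDerivAt (hUab hx)) (hU.hasDerivAt_deriv (hUab hx))
      (hV.hasDerivAt (hVab hx)) (hV.hasDerivAt_deriv (hVab hx)) (hU.ode (hUab hx))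
      (hV.ode (hVab hx))
  refine antitoneOn_of_hasDerivWithinAt_nonpos (convex_Icc a b)
    (fun x hx => (hW x hx).continuousAt.continuousWithinAt)
    (fun x hx => (hW x (interior_subset hx)).hasDerivWithinAt) (fun x hx => ?_)
  have hx := interior_subset hx
  linarith [hf.apply_mul_le_apply_mul (hU.pos (hUab hx)) (hUV x hx)]

theorem right_le_of_apex_lt {R' s₁ s₂ : ℝ} {V V' V'' : ℝ → ℝ} (hf : CondStar f)
    (hfpos : ∀ x, 0 < x → 0 < f x) (hRR' : R < R') (hU : IsArchSolution f R M r₁ r₂ U U' U'')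
    (hV : IsArchSolution f R' M s₁ s₂ V V' V'') : r₂ ≤ s₂ := by
  by_contra! hs₂
  have hR' : R' ∈ Ioc R r₂ := ⟨hRR', hV.apex_lt_right.le.trans hs₂.le⟩
  have hr₁R' : r₁ < R' := hU.left_lt_apex.trans hRR'
  obtain ⟨σ, hσ, hσ0, hlt⟩ := exists_first_zero_of_neg_of_pos (g := fun r => U r - V r)
    hV.apex_lt_right.le ((hU.continuousOn.mono (Icc_subset_Icc hr₁R'.le hs₂.le)).sub
      (hV.continuousOn.mono (Icc_subset_Icc_left hV.left_lt_apex.le)))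
    (by simpa [hV.apply_apex] using hU.lt_height_of_mem_Ioc hfpos hR')
    (by simpa [hV.apply_right] using
      hU.pos ⟨hr₁R'.trans hV.apex_lt_right, hs₂⟩)
  have hUσ : Icc R' σ ⊆ Ioo r₁ r₂ := Icc_subset_Ioo hr₁R' (hσ.2.trans hs₂)
  have hVσ : Icc R' σ ⊆ Ioo s₁ s₂ := Icc_subset_Ioo hV.left_lt_apex hσ.2
  have hR'mem : R' ∈ Icc R' σ := left_mem_Icc.2 hσ.1.le
  have hσmem : σ ∈ Icc R' σ := right_mem_Icc.2 hσ.1.le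
  have hUV : ∀ x ∈ Icc R' σ, U x ≤ V x := fun x hx => by
    rcases hx.2.lt_or_eq with hxσ | rfl
    · linarith [hlt x ⟨hx.1, hxσ⟩]
    · linarith
  have hanti := hU.antitoneOn_weightedWronskian hf hV hUσ hVσ hUV hR'mem hσmem hσ.1.le
  have hWR' : weightedWronskian U U' V V' R' < 0 := by
    have := mul_neg_of_pos_of_neg (mul_pos (hU.one_sub_sq_pos (Ioo_subset_Icc_self
      (hUσ hR'mem))) hV.height_pos) (hU.deriv_neg_of_mem_Ioc hfpos hR')
    simp only [weightedWronskian, hV.apply_apex, hV.deriv_apex]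
    linarith
  have hslope : 0 ≤ U' σ - V' σ :=
    ((hU.hasDerivAt (hUσ hσmem)).sub (hV.hasDerivAt (hVσ hσmem))).nonneg_of_le_left hσ.1
      fun x hx => by simp only [Pi.sub_apply]; linarith [hlt x (Ioo_subset_Ico_self hx)]
  have hWσ : 0 ≤ weightedWronskian U U' V V' σ := by
    have hVσeq : V σ = U σ := by linarith
    rw [weightedWronskian, hVσeq, show U' σ * U σ - U σ * V' σ = U σ * (U' σ - V' σ) by ring]
    exact mul_nonneg (hU.one_sub_sq_pos (Ioo_subset_Icc_self (hUσ hσmem))).le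
      (mul_nonneg (hU.pos (hUσ hσmem)).le hslope)
  linarith

end IsArchSolution

theorem stmt_8_general (f : ℝ → ℝ) (hstar : CondStar f) (hfpos : ∀ x : ℝ, 0 < x → 0 < f x)
    (M : ℝ)
    (R R' : ℝ) (hRR' : R < R')
    (r₁ r₂ : ℝ) (U U' U'' : ℝ → ℝ)
    (harch : IsArchSolution f R M r₁ r₂ U U' U'')
    (s₁ s₂ : ℝ) (V V' V'' : ℝ → ℝ)
    (harch' : IsArchSolution f R' M s₁ s₂ V V' V'') :
    r₁ ≤ s₁ ∧ r₂ ≤ s₂ := by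
  refine ⟨?_, harch.right_le_of_apex_lt hstar hfpos hRR' harch'⟩
  have := harch'.reflect.right_le_of_apex_lt hstar hfpos (neg_lt_neg hRR') harch.reflect
  linarith

/-- Let `f` satisfy condition (★) and `f(x) > 0` for all `x > 0`, and fix
`M > 0`. Let `R, R' ∈ [0,1)` with `R < R'`, let `(r₁, r₂, U)` be an arch solution with
parameters `(R,M)` and `(r₁', r₂', V)` an arch solution with parameters `(R',M)`. Then
`r₁ ≤ r₁'` and `r₂ ≤ r₂'`. -/
theorem stmt_8 (f : ℝ → ℝ) (hstar : CondStar f) (hfpos : ∀ x : ℝ, 0 < x → 0 < f x)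
    (M : ℝ) (hM : 0 < M)
    (R R' : ℝ) (hR : R ∈ Ico (0 : ℝ) 1) (hR' : R' ∈ Ico (0 : ℝ) 1) (hRR' : R < R')
    (r₁ r₂ : ℝ) (U U' U'' : ℝ → ℝ)
    (harch : IsArchSolution f R M r₁ r₂ U U' U'')
    (s₁ s₂ : ℝ) (V V' V'' : ℝ → ℝ)
    (harch' : IsArchSolution f R' M s₁ s₂ V V' V'') :
    r₁ ≤ s₁ ∧ r₂ ≤ s₂ :=
  stmt_8_general f hstar hfpos M R R' hRR' r₁ r₂ U U' U'' harch s₁ s₂ V V' V'' harch'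
end

section
/- Let f : ℝ → ℝ be continuous, let R ∈ (-1,1) and M > 0 with f(M) > 0, and let U be a C² solution of the model ODE (1-r²)·U''(r) - 2r·U'(r) + f(U(r)) = 0 on an open interval I ⊆ (-1,1) containing R, with U(R) = M and U'(R) = 0. Then the limit as r → R, r ≠ R, of (1-r²)·U'(r)² / (M - U(r)) exists and equals 2·f(M). -/
open Set Filter Topology

/-!
Both `(1 - r²)·U'²` and `M - U` vanish at `R`, so this is a `0/0` limit and l'Hôpital's rule
applies. The ODE at `R` gives `(1 - R²)·U''(R) = -f(M) ≠ 0`, so `U''(R) ≠ 0` and `U'`, the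
derivative of the denominator up to sign, has no zero near `R` other than `R` itself. The
quotient of derivatives is `-2r·U' - 2(1 - r²)·U''`, and the ODE rewrites `(1 - r²)·U''` as
`2r·U' - f(U)`, which is continuous and tends to `-f(M)`.
-/

theorem tendsto_mul_deriv_sq_div_sub_of_deriv_eq_zero {p p' U U' U'' : ℝ → ℝ} {R : ℝ}
    (hp : ∀ᶠ r in 𝓝 R, HasDerivAt p (p' r) r) (hp' : ContinuousAt p' R)
    (hU : ∀ᶠ r in 𝓝 R, HasDerivAt U (U' r) r) (hU' : ∀ᶠ r in 𝓝 R, HasDerivAt U' (U'' r) r)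
    (hU'R : U' R = 0) (hU''R : U'' R ≠ 0) (hpU'' : ContinuousAt (fun r => p r * U'' r) R) :
    Tendsto (fun r => p r * U' r ^ 2 / (U R - U r)) (𝓝[≠] R) (𝓝 (-2 * (p R * U'' R))) := by
  have hU'_ne : ∀ᶠ r in 𝓝[≠] R, U' r ≠ 0 := by
    simpa only [hU'R] using hU'.self_of_nhds.eventually_ne hU''R
  have hnum : ∀ᶠ r in 𝓝[≠] R, HasDerivAt (fun r => p r * U' r ^ 2)
      (p' r * U' r ^ 2 + p r * (2 * U' r * U'' r)) r := by
    refine eventually_nhdsWithin_of_eventually_nhds ?_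
    filter_upwards [hp, hU'] with r hpr hU'r
    exact (hpr.fun_mul (hU'r.fun_pow 2)).congr_deriv (by push_cast; ring)
  have hden : ∀ᶠ r in 𝓝[≠] R, HasDerivAt (fun r => U R - U r) (-U' r) r :=
    eventually_nhdsWithin_of_eventually_nhds (hU.mono fun r hr => hr.const_sub _)
  have hnum_lim : Tendsto (fun r => p r * U' r ^ 2) (𝓝[≠] R) (𝓝 0) := by
    have h : ContinuousAt (fun r => p r * U' r ^ 2) R :=
      hp.self_of_nhds.continuousAt.mul (hU'.self_of_nhds.continuousAt.pow 2)
    simpa only [hU'R, zero_pow two_ne_zero, mul_zero] using h.tendsto.mono_left nhdsWithin_le_nhds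
  have hden_lim : Tendsto (fun r => U R - U r) (𝓝[≠] R) (𝓝 0) := by
    have h : ContinuousAt (fun r => U R - U r) R :=
      continuousAt_const.sub hU.self_of_nhds.continuousAt
    simpa only [sub_self] using h.tendsto.mono_left nhdsWithin_le_nhds
  have hquot_lim : Tendsto (fun r => -(p' r * U' r) - 2 * (p r * U'' r)) (𝓝[≠] R)
      (𝓝 (-2 * (p R * U'' R))) := by
    have h : ContinuousAt (fun r => -(p' r * U' r) - 2 * (p r * U'' r)) R :=
      (hp'.mul hU'.self_of_nhds.continuousAt).neg.sub (hpU''.const_mul 2)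
    simpa only [hU'R, mul_zero, neg_zero, zero_sub, ← neg_mul] using
      h.tendsto.mono_left nhdsWithin_le_nhds
  refine HasDerivAt.lhopital_zero_nhdsNE hnum hden (hU'_ne.mono fun r => neg_ne_zero.mpr)
    hnum_lim hden_lim (hquot_lim.congr' ?_)
  filter_upwards [hU'_ne] with r hr
  field_simp
  ring

theorem stmt_11_general (f : ℝ → ℝ) (hf : Continuous f)
    (R M : ℝ) (hfM : 0 < f M)
    (a b : ℝ) (hRab : R ∈ Ioo a b)
    (U U' U'' : ℝ → ℝ)
    (hU : ∀ r ∈ Ioo a b, HasDerivAt U (U' r) r)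
    (hU' : ∀ r ∈ Ioo a b, HasDerivAt U' (U'' r) r)
    (hODE : ∀ r ∈ Ioo a b, (1 - r ^ 2) * U'' r - 2 * r * U' r + f (U r) = 0)
    (hUR : U R = M) (hU'R : U' R = 0) :
    Filter.Tendsto (fun r => (1 - r ^ 2) * (U' r) ^ 2 / (M - U r))
      (nhdsWithin R (Ioo a b \ {R})) (nhds (2 * f M)) := by
  have hI : ∀ᶠ r in 𝓝 R, r ∈ Ioo a b := isOpen_Ioo.mem_nhds hRab
  have hODE_R : (1 - R ^ 2) * U'' R = -f M := by
    have h := hODE R hRab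
    rw [hUR, hU'R] at h
    linarith
  have hU''R : U'' R ≠ 0 := by
    rintro h
    rw [h, mul_zero] at hODE_R
    linarith
  have hpU'' : ContinuousAt (fun r => (1 - r ^ 2) * U'' r) R := by
    refine ContinuousAt.congr (f := fun r => 2 * r * U' r - f (U r)) ?_ ?_
    · exact (continuousAt_const.mul continuousAt_id).mul (hU' R hRab).continuousAt |>.sub
        (hf.continuousAt.comp (hU R hRab).continuousAt)
    · filter_upwards [hI] with r hr
      linarith [hODE r hr]
  have hp : ∀ᶠ r in 𝓝 R, HasDerivAt (fun r : ℝ => 1 - r ^ 2) (-(2 * r)) r :=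
    Eventually.of_forall fun r => by simpa using (hasDerivAt_pow 2 r).const_sub 1
  have h := tendsto_mul_deriv_sq_div_sub_of_deriv_eq_zero hp (by fun_prop)
    (hI.mono hU) (hI.mono hU') hU'R hU''R hpU''
  rw [hUR, hODE_R, neg_mul_neg] at h
  exact h.mono_left (nhdsWithin_mono R fun r hr => hr.2)

/-- Let `f : ℝ → ℝ` be continuous, let `R ∈ (-1,1)` and `M > 0` with
`f(M) > 0`, and let `U` be a C² solution of the model ODE
`(1-r²)·U''(r) - 2r·U'(r) + f(U(r)) = 0` on an open interval `I = (a,b) ⊆ (-1,1)` containing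
`R`, with `U(R) = M` and `U'(R) = 0`. Then the limit as `r → R`, `r ≠ R`, of
`(1-r²)·U'(r)² / (M - U(r))` exists and equals `2·f(M)`. -/
theorem stmt_11 (f : ℝ → ℝ) (hf : Continuous f)
    (R M : ℝ) (hR : R ∈ Ioo (-1 : ℝ) 1) (hM : 0 < M) (hfM : 0 < f M)
    (a b : ℝ) (hab : Ioo a b ⊆ Ioo (-1 : ℝ) 1) (hRab : R ∈ Ioo a b)
    (U U' U'' : ℝ → ℝ)
    (hU : ∀ r ∈ Ioo a b, HasDerivAt U (U' r) r)
    (hU' : ∀ r ∈ Ioo a b, HasDerivAt U' (U'' r) r)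
    (hU''cont : ContinuousOn U'' (Ioo a b))
    (hODE : ∀ r ∈ Ioo a b, (1 - r ^ 2) * U'' r - 2 * r * U' r + f (U r) = 0)
    (hUR : U R = M) (hU'R : U' R = 0) :
    Filter.Tendsto (fun r => (1 - r ^ 2) * (U' r) ^ 2 / (M - U r))
      (nhdsWithin R (Ioo a b \ {R})) (nhds (2 * f M)) :=
  stmt_11_general f hf R M hfM a b hRab U U' U'' hU hU' hODE hUR hU'R
end

section
/- Let f : ℝ → ℝ be C², let R ∈ (-1,1) and M > 0, and let U be a C² solution of the model ODE (1-r²)·U''(r) - 2r·U'(r) + f(U(r)) = 0 on an open interval I ⊆ (-1,1) containing R, with U(R) = M and U'(R) = 0. Then, as r → R, M - U(r) = (f(M)/(2(1-R²)))·(r-R)² + (2R·f(M)/(3(1-R²)²))·(r-R)³ + O((r-R)⁴). -/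
/-!
Solving the ODE for `U''` shows that `U''` is itself differentiable, with
`U''' = (2U' + 4rU'' - f'(U)U') / (1 - r²)`, and `U'''` is differentiable at `R` because `f`
is C². Integrating `U''' - U'''(R) = O(r - R)` three times with the mean value inequality gives
the cubic Taylor expansion with an `O((r - R)⁴)` remainder. At `R` the ODE and `U'(R) = 0` give
`U''(R) = -f(M)/(1 - R²)` and `U'''(R) = -4R f(M)/(1 - R²)²`.
-/

open Set Asymptotics Filter Topology Metric
open scoped Nat

section Taylor

variable {R : ℝ}

theorem isBigO_pow_succ_of_hasDerivAt {g g' : ℝ → ℝ} {k : ℕ}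
    (hg : ∀ᶠ r in 𝓝 R, HasDerivAt g (g' r) r) (hgR : g R = 0)
    (h : g' =O[𝓝 R] fun r => (r - R) ^ k) :
    g =O[𝓝 R] fun r => (r - R) ^ (k + 1) := by
  obtain ⟨C, hC0, hC⟩ := h.exists_nonneg
  obtain ⟨ε, hε, hball⟩ := eventually_nhds_iff_ball.mp (hg.and hC.bound)
  refine IsBigO.of_bound C (eventually_nhds_iff_ball.mpr ⟨ε, hε, fun y hy => ?_⟩)
  have hsub : closedBall R (dist y R) ⊆ ball R ε := closedBall_subset_ball hy
  have hbound : ∀ x ∈ closedBall R (dist y R), ‖g' x‖ ≤ C * ‖y - R‖ ^ k := by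
    intro x hx
    refine (hball x (hsub hx)).2.trans ?_
    rw [norm_pow]
    gcongr
    simpa [← dist_eq_norm] using hx
  have hmvt := (convex_closedBall R (dist y R)).norm_image_sub_le_of_norm_hasDerivWithin_le
    (fun x hx => (hball x (hsub hx)).1.hasDerivWithinAt) hbound
    (mem_closedBall_self dist_nonneg) (mem_closedBall.mpr le_rfl)
  rw [hgR, sub_zero] at hmvt
  rw [norm_pow, pow_succ, ← mul_assoc]
  exact hmvt

theorem hasDerivAt_sum_div_factorial_mul_pow (c : ℕ → ℝ) (n : ℕ) (r : ℝ) :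
    HasDerivAt (fun r => ∑ k ∈ Finset.range (n + 2), c k / k ! * (r - R) ^ k)
      (∑ k ∈ Finset.range (n + 1), c (k + 1) / k ! * (r - R) ^ k) r := by
  have hterm : ∀ k ∈ Finset.range (n + 1),
      HasDerivAt (fun r => c (k + 1) / (k + 1)! * (r - R) ^ (k + 1))
        (c (k + 1) / k ! * (r - R) ^ k) r := by
    intro k _
    refine ((((hasDerivAt_id' r).sub_const R).fun_pow (k + 1)).const_mul _).congr_deriv ?_
    rw [Nat.factorial_succ, Nat.add_sub_cancel]
    push_cast
    field_simp
  simp only [Finset.sum_range_succ' _ (n + 1), pow_zero, Nat.factorial_zero, Nat.cast_one, div_one,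
    mul_one]
  exact (HasDerivAt.fun_sum hterm).add_const _

theorem isBigO_sub_sum_div_factorial_mul_pow {D : ℕ → ℝ → ℝ} {n : ℕ}
    (hD : ∀ k < n, ∀ᶠ r in 𝓝 R, HasDerivAt (D k) (D (k + 1) r) r)
    (hDn : DifferentiableAt ℝ (D n) R) :
    (fun r => D 0 r - ∑ k ∈ Finset.range (n + 1), D k R / k ! * (r - R) ^ k)
      =O[𝓝 R] fun r => (r - R) ^ (n + 1) := by
  induction n generalizing D with
  | zero => simpa using hDn.isBigO_sub
  | succ n ih =>
    refine isBigO_pow_succ_of_hasDerivAt ?_ ?_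
      (ih (D := fun k => D (k + 1)) (fun k hk => hD (k + 1) (by omega)) hDn)
    · filter_upwards [hD 0 n.succ_pos] with r hr
      exact hr.sub (hasDerivAt_sum_div_factorial_mul_pow _ n r)
    · simp [Finset.sum_range_succ' _ (n + 1)]

end Taylor

theorem hasDerivAt_secondDeriv_of_modelODE {f U U' U'' : ℝ → ℝ} {r : ℝ}
    (hf : DifferentiableAt ℝ f (U r)) (hr : 1 - r ^ 2 ≠ 0)
    (hU : HasDerivAt U (U' r) r) (hU' : HasDerivAt U' (U'' r) r)
    (hODE : ∀ᶠ x in 𝓝 r, (1 - x ^ 2) * U'' x - 2 * x * U' x + f (U x) = 0) :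
    HasDerivAt U'' ((2 * U' r + 4 * r * U'' r - deriv f (U r) * U' r) / (1 - r ^ 2)) r := by
  have hne : ∀ᶠ x in 𝓝 r, 1 - x ^ 2 ≠ 0 :=
    (continuous_const.sub (continuous_pow 2)).continuousAt.eventually_ne hr
  have hsolved : U'' =ᶠ[𝓝 r] fun x => (2 * x * U' x - f (U x)) / (1 - x ^ 2) := by
    filter_upwards [hODE, hne] with x hx hx0
    rw [eq_div_iff hx0]
    linarith
  have hquot := ((((hasDerivAt_id' r).const_mul 2).mul hU').sub (hf.hasDerivAt.comp r hU)).div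
    (((hasDerivAt_id' r).fun_pow 2).const_sub 1) hr
  refine (hquot.congr_of_eventuallyEq hsolved).congr_deriv ?_
  have hfU : f (U r) = 2 * r * U' r - (1 - r ^ 2) * U'' r := by linarith [hODE.self_of_nhds]
  simp only [Pi.mul_apply, Pi.sub_apply, Function.comp_apply, hfU]
  field_simp
  ring

theorem isBigO_sub_cubic_of_modelODE {f U U' U'' : ℝ → ℝ} {R : ℝ} (hf : ContDiff ℝ 2 f)
    (hR : 1 - R ^ 2 ≠ 0) (hU : ∀ᶠ r in 𝓝 R, HasDerivAt U (U' r) r)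
    (hU' : ∀ᶠ r in 𝓝 R, HasDerivAt U' (U'' r) r)
    (hODE : ∀ᶠ r in 𝓝 R, (1 - r ^ 2) * U'' r - 2 * r * U' r + f (U r) = 0) :
    (fun r => U r - (U R + U' R * (r - R) + U'' R / 2 * (r - R) ^ 2
        + (2 * U' R + 4 * R * U'' R - deriv f (U R) * U' R) / (1 - R ^ 2) / 6 * (r - R) ^ 3))
      =O[𝓝 R] fun r => (r - R) ^ 4 := by
  set U''' : ℝ → ℝ := fun r => (2 * U' r + 4 * r * U'' r - deriv f (U r) * U' r) / (1 - r ^ 2)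
  have hfd : Differentiable ℝ f := hf.differentiable two_ne_zero
  have hf'd : Differentiable ℝ (deriv f) := (hf.iterate_deriv' 1 1).differentiable one_ne_zero
  have hne : ∀ᶠ r in 𝓝 R, 1 - r ^ 2 ≠ 0 :=
    (continuous_const.sub (continuous_pow 2)).continuousAt.eventually_ne hR
  have hU'' : ∀ᶠ r in 𝓝 R, HasDerivAt U'' (U''' r) r := by
    filter_upwards [hU, hU', hODE.eventually_nhds, hne] with r hUr hU'r hODEr hr
    exact hasDerivAt_secondDeriv_of_modelODE (hfd _) hr hUr hU'r hODEr
  have hU'''R : DifferentiableAt ℝ U''' R := by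
    have := hU.self_of_nhds.differentiableAt
    have := hU'.self_of_nhds.differentiableAt
    have := hU''.self_of_nhds.differentiableAt
    have := hf'd (U R)
    fun_prop (disch := exact hR)
  let D : ℕ → ℝ → ℝ := fun | 0 => U | 1 => U' | 2 => U'' | _ => U'''
  have hD : ∀ k < 3, ∀ᶠ r in 𝓝 R, HasDerivAt (D k) (D (k + 1) r) r := by
    intro k hk
    interval_cases k
    exacts [hU, hU', hU'']
  refine (isBigO_sub_sum_div_factorial_mul_pow hD hU'''R).congr_left fun r => ?_
  simp [D, Finset.sum_range_succ, U''', Nat.factorial]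

theorem stmt_12_general (f : ℝ → ℝ) (hf : ContDiff ℝ 2 f)
    (R M : ℝ) (hR : R ∈ Ioo (-1 : ℝ) 1)
    (a b : ℝ) (hRab : R ∈ Ioo a b)
    (U U' U'' : ℝ → ℝ)
    (hU : ∀ r ∈ Ioo a b, HasDerivAt U (U' r) r)
    (hU' : ∀ r ∈ Ioo a b, HasDerivAt U' (U'' r) r)
    (hODE : ∀ r ∈ Ioo a b, (1 - r ^ 2) * U'' r - 2 * r * U' r + f (U r) = 0)
    (hUR : U R = M) (hU'R : U' R = 0) :
    (fun r => (M - U r) - (f M / (2 * (1 - R ^ 2))) * (r - R) ^ 2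
        - (2 * R * f M / (3 * (1 - R ^ 2) ^ 2)) * (r - R) ^ 3)
      =O[nhdsWithin R (Ioo a b)] fun r => (r - R) ^ 4 := by
  have hI : Ioo a b ∈ 𝓝 R := isOpen_Ioo.mem_nhds hRab
  have hR0 : 1 - R ^ 2 ≠ 0 := by nlinarith [hR.1, hR.2]
  have hU''R : U'' R = -f M / (1 - R ^ 2) := by
    have hODER := hODE R hRab
    rw [hUR, hU'R] at hODER
    rw [eq_div_iff hR0]
    linarith
  have hcubic := isBigO_sub_cubic_of_modelODE hf hR0 (eventually_of_mem hI hU)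
    (eventually_of_mem hI hU') (eventually_of_mem hI hODE)
  refine (hcubic.neg_left.mono nhdsWithin_le_nhds).congr_left fun r => ?_
  rw [hUR, hU'R, hU''R]
  field_simp
  ring

/-- Let `f : ℝ → ℝ` be C², let `R ∈ (-1,1)` and `M > 0`, and let `U` be a
C² solution of the model ODE `(1-r²)·U''(r) - 2r·U'(r) + f(U(r)) = 0` on an open interval
`I = (a,b) ⊆ (-1,1)` containing `R`, with `U(R) = M` and `U'(R) = 0`. Then, as `r → R`,
`M - U(r) = (f(M)/(2(1-R²)))·(r-R)² + (2R·f(M)/(3(1-R²)²))·(r-R)³ + O((r-R)⁴)`. -/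
theorem stmt_12 (f : ℝ → ℝ) (hf : ContDiff ℝ 2 f)
    (R M : ℝ) (hR : R ∈ Ioo (-1 : ℝ) 1) (hM : 0 < M)
    (a b : ℝ) (hab : Ioo a b ⊆ Ioo (-1 : ℝ) 1) (hRab : R ∈ Ioo a b)
    (U U' U'' : ℝ → ℝ)
    (hU : ∀ r ∈ Ioo a b, HasDerivAt U (U' r) r)
    (hU' : ∀ r ∈ Ioo a b, HasDerivAt U' (U'' r) r)
    (hU''cont : ContinuousOn U'' (Ioo a b))
    (hODE : ∀ r ∈ Ioo a b, (1 - r ^ 2) * U'' r - 2 * r * U' r + f (U r) = 0)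
    (hUR : U R = M) (hU'R : U' R = 0) :
    (fun r => (M - U r) - (f M / (2 * (1 - R ^ 2))) * (r - R) ^ 2
        - (2 * R * f M / (3 * (1 - R ^ 2) ^ 2)) * (r - R) ^ 3)
      =O[nhdsWithin R (Ioo a b)] fun r => (r - R) ^ 4 :=
  stmt_12_general f hf R M hR a b hRab U U' U'' hU hU' hODE hUR hU'R
end

section
/- Let f : ℝ → ℝ be C², let R ∈ (-1,1) and M > 0, and let U be a C² solution of the model ODE (1-r²)·U''(r) - 2r·U'(r) + f(U(r)) = 0 on an open interval I ⊆ (-1,1) containing R, with U(R) = M and U'(R) = 0. Define W(r) = (1-r²)·U'(r)². Then W is three times differentiable at R, with W(R) = 0, W'(R) = 0, W''(R) = 2·f(M)²/(1-R²), and W'''(R) = 12·R·f(M)²/(1-R²)². -/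
open Set

/-!
Differentiating `W = (1 - r²) U'²` and eliminating `U''` with the ODE gives
`W' = 2r U'² - 2U' f(U)`, a formula free of `U''`; differentiating once more and again
eliminating `U''` gives `W'' = 2U'² + 2(2rU' - f(U))²/(1 - r²) - 2U'² f'(U)`.
At a critical point `R` of `U` every term carrying a factor `U'` or `U'²` vanishes to the order
needed, and `2rU' - f(U)` has value `-f(M)` and derivative `2R U''(R) = -2R f(M)/(1 - R²)`.
-/

namespace ModelODE

def energy (U' : ℝ → ℝ) (r : ℝ) : ℝ := (1 - r ^ 2) * U' r ^ 2

def energyDeriv (f U U' : ℝ → ℝ) (r : ℝ) : ℝ := 2 * r * U' r ^ 2 - 2 * U' r * f (U r)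

noncomputable def energyDeriv2 (f U U' : ℝ → ℝ) (r : ℝ) : ℝ :=
  2 * U' r ^ 2 + 2 * (2 * r * U' r - f (U r)) ^ 2 / (1 - r ^ 2) - 2 * U' r ^ 2 * deriv f (U r)

variable {f U U' : ℝ → ℝ} {r u'' : ℝ}

theorem one_sub_sq_ne_zero (hr : r ∈ Ioo (-1 : ℝ) 1) : 1 - r ^ 2 ≠ 0 := by
  nlinarith [hr.1, hr.2]

theorem second_deriv_eq (hr : 1 - r ^ 2 ≠ 0)
    (hODE : (1 - r ^ 2) * u'' - 2 * r * U' r + f (U r) = 0) :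
    u'' = (2 * r * U' r - f (U r)) / (1 - r ^ 2) := by
  rw [eq_div_iff hr]
  linarith

theorem hasDerivAt_energy (hU' : HasDerivAt U' u'' r)
    (hODE : (1 - r ^ 2) * u'' - 2 * r * U' r + f (U r) = 0) :
    HasDerivAt (energy U') (energyDeriv f U U' r) r := by
  have h := ((hasDerivAt_pow 2 r).const_sub 1).mul (hU'.pow 2)
  refine h.congr_deriv ?_
  simp only [energyDeriv, Nat.cast_ofNat, Pi.pow_apply]
  linear_combination 2 * U' r * hODE

theorem hasDerivAt_energyDeriv (hf : DifferentiableAt ℝ f (U r)) (hU : HasDerivAt U (U' r) r)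
    (hU' : HasDerivAt U' u'' r) (hr : 1 - r ^ 2 ≠ 0)
    (hODE : (1 - r ^ 2) * u'' - 2 * r * U' r + f (U r) = 0) :
    HasDerivAt (energyDeriv f U U') (energyDeriv2 f U U' r) r := by
  have hfU : HasDerivAt (fun s => f (U s)) (deriv f (U r) * U' r) r := hf.hasDerivAt.comp r hU
  have h := (((hasDerivAt_id r).const_mul 2).mul (hU'.pow 2)).sub ((hU'.const_mul 2).mul hfU)
  refine h.congr_deriv ?_
  simp only [energyDeriv2, id, Nat.cast_ofNat, Pi.pow_apply, second_deriv_eq hr hODE]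
  field_simp
  ring

theorem hasDerivAt_energyDeriv2_of_deriv_eq_zero (hf : DifferentiableAt ℝ f (U r))
    (hf' : DifferentiableAt ℝ (deriv f) (U r)) (hU : HasDerivAt U (U' r) r)
    (hU' : HasDerivAt U' u'' r) (hr : 1 - r ^ 2 ≠ 0)
    (hODE : (1 - r ^ 2) * u'' - 2 * r * U' r + f (U r) = 0) (hcrit : U' r = 0) :
    HasDerivAt (energyDeriv2 f U U') (12 * r * f (U r) ^ 2 / (1 - r ^ 2) ^ 2) r := by
  have hfU : HasDerivAt (fun s => f (U s)) (deriv f (U r) * U' r) r := hf.hasDerivAt.comp r hU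
  have hf'U : HasDerivAt (fun s => deriv f (U s)) (deriv (deriv f) (U r) * U' r) r :=
    hf'.hasDerivAt.comp r hU
  have hsq := (hU'.pow 2).const_mul 2
  have hrhs := (((hasDerivAt_id r).const_mul 2).mul hU').sub hfU
  have hquot := ((hrhs.pow 2).const_mul 2).div ((hasDerivAt_pow 2 r).const_sub 1) hr
  have h := (hsq.add hquot).sub (hsq.mul hf'U)
  refine h.congr_deriv ?_
  simp only [id, Nat.cast_ofNat, Pi.mul_apply, Pi.sub_apply, Pi.pow_apply, second_deriv_eq hr hODE, hcrit]
  field_simp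
  ring

end ModelODE

open ModelODE in
theorem stmt_13_general (f : ℝ → ℝ) (hf : ContDiff ℝ 2 f)
    (R M : ℝ)
    (a b : ℝ) (hab : Ioo a b ⊆ Ioo (-1 : ℝ) 1) (hRab : R ∈ Ioo a b)
    (U U' U'' : ℝ → ℝ)
    (hU : ∀ r ∈ Ioo a b, HasDerivAt U (U' r) r)
    (hU' : ∀ r ∈ Ioo a b, HasDerivAt U' (U'' r) r)
    (hODE : ∀ r ∈ Ioo a b, (1 - r ^ 2) * U'' r - 2 * r * U' r + f (U r) = 0)
    (hUR : U R = M) (hU'R : U' R = 0) :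
    ∃ (W₁ W₂ : ℝ → ℝ) (ε : ℝ), 0 < ε ∧ Ioo (R - ε) (R + ε) ⊆ Ioo a b ∧
      (∀ r ∈ Ioo (R - ε) (R + ε),
        HasDerivAt (fun s => (1 - s ^ 2) * (U' s) ^ 2) (W₁ r) r) ∧
      (∀ r ∈ Ioo (R - ε) (R + ε), HasDerivAt W₁ (W₂ r) r) ∧
      HasDerivAt W₂ (12 * R * (f M) ^ 2 / (1 - R ^ 2) ^ 2) R ∧
      (1 - R ^ 2) * (U' R) ^ 2 = 0 ∧ W₁ R = 0 ∧ W₂ R = 2 * (f M) ^ 2 / (1 - R ^ 2) := by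
  obtain ⟨ε, hε, hball⟩ := Metric.isOpen_iff.mp isOpen_Ioo R hRab
  rw [Real.ball_eq_Ioo] at hball
  have hne : ∀ r ∈ Ioo a b, 1 - r ^ 2 ≠ 0 := fun r hr => one_sub_sq_ne_zero (hab hr)
  have hfd := hf.differentiable two_ne_zero
  refine ⟨energyDeriv f U U', energyDeriv2 f U U', ε, hε, hball,
    fun r hr => hasDerivAt_energy (hU' r (hball hr)) (hODE r (hball hr)),
    fun r hr => hasDerivAt_energyDeriv (hfd _) (hU r (hball hr)) (hU' r (hball hr))
      (hne r (hball hr)) (hODE r (hball hr)), ?_, by simp [hU'R], by simp [energyDeriv, hU'R],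
    by simp [energyDeriv2, hU'R, hUR]⟩
  rw [← hUR]
  exact hasDerivAt_energyDeriv2_of_deriv_eq_zero (hfd _) (hf.differentiable_deriv_two _)
    (hU R hRab) (hU' R hRab) (hne R hRab) (hODE R hRab) hU'R

/-- Let `f : ℝ → ℝ` be C², let `R ∈ (-1,1)` and `M > 0`, and let `U` be a
C² solution of the model ODE `(1-r²)·U''(r) - 2r·U'(r) + f(U(r)) = 0` on an open interval
`I = (a,b) ⊆ (-1,1)` containing `R`, with `U(R) = M` and `U'(R) = 0`. Define
`W(r) = (1-r²)·U'(r)²`. Then `W` is three times differentiable at `R`, with `W(R) = 0`,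
`W'(R) = 0`, `W''(R) = 2·f(M)²/(1-R²)`, and `W'''(R) = 12·R·f(M)²/(1-R²)²`. -/
theorem stmt_13 (f : ℝ → ℝ) (hf : ContDiff ℝ 2 f)
    (R M : ℝ) (hR : R ∈ Ioo (-1 : ℝ) 1) (hM : 0 < M)
    (a b : ℝ) (hab : Ioo a b ⊆ Ioo (-1 : ℝ) 1) (hRab : R ∈ Ioo a b)
    (U U' U'' : ℝ → ℝ)
    (hU : ∀ r ∈ Ioo a b, HasDerivAt U (U' r) r)
    (hU' : ∀ r ∈ Ioo a b, HasDerivAt U' (U'' r) r)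
    (hU''cont : ContinuousOn U'' (Ioo a b))
    (hODE : ∀ r ∈ Ioo a b, (1 - r ^ 2) * U'' r - 2 * r * U' r + f (U r) = 0)
    (hUR : U R = M) (hU'R : U' R = 0) :
    ∃ (W₁ W₂ : ℝ → ℝ) (ε : ℝ), 0 < ε ∧ Ioo (R - ε) (R + ε) ⊆ Ioo a b ∧
      (∀ r ∈ Ioo (R - ε) (R + ε),
        HasDerivAt (fun s => (1 - s ^ 2) * (U' s) ^ 2) (W₁ r) r) ∧
      (∀ r ∈ Ioo (R - ε) (R + ε), HasDerivAt W₁ (W₂ r) r) ∧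
      HasDerivAt W₂ (12 * R * (f M) ^ 2 / (1 - R ^ 2) ^ 2) R ∧
      (1 - R ^ 2) * (U' R) ^ 2 = 0 ∧ W₁ R = 0 ∧ W₂ R = 2 * (f M) ^ 2 / (1 - R ^ 2) :=
  stmt_13_general f hf R M a b hab hRab U U' U'' hU hU' hODE hUR hU'R
end

section
/- Let f : ℝ → ℝ be C¹ and M > 0. Let J be an open interval, I ⊆ (-1,1) an open interval with J ⊆ I, and let 𝒰 : J × I → ℝ be C³ such that for every R ∈ J the function r ↦ 𝒰(R,r) solves the model ODE (1-r²)·∂ᵣ²𝒰(R,r) - 2r·∂ᵣ𝒰(R,r) + f(𝒰(R,r)) = 0 on I, with 𝒰(R,R) = M and ∂ᵣ𝒰(R,R) = 0. Fix R₀ ∈ J and define Z(r) = ∂_R𝒰(R,r) evaluated at R = R₀. Then Z is a solution of the linearized equation (1-r²)·Z''(r) - 2r·Z'(r) + f'(𝒰(R₀,r))·Z(r) = 0 on I, with Z(R₀) = 0 and Z'(R₀) = f(M)/(1-R₀²). -/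
open Set Topology Filter

/-!
Differentiating the family of ODEs in the parameter `R` gives the linearized equation for
`Z = ∂_R 𝒰`, once the mixed partial derivatives of the C³ function `𝒰` are commuted. The
initial values come from differentiating the identities `𝒰(R,R) = M` and `∂ᵣ𝒰(R,R) = 0`
along the diagonal: this gives `Z(R₀) = -∂ᵣ𝒰(R₀,R₀) = 0` and `Z'(R₀) = -∂ᵣ²𝒰(R₀,R₀)`, and the
ODE at `r = R₀` evaluates the latter as `f(M)/(1-R₀²)`.
-/

noncomputable def partialDeriv {E F : Type*} [NormedAddCommGroup E] [NormedSpace ℝ E]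
    [NormedAddCommGroup F] [NormedSpace ℝ F] (v : E) (g : E → F) : E → F :=
  fun p => fderiv ℝ g p v

local notation "∂₁" => partialDeriv ((1 : ℝ), (0 : ℝ))
local notation "∂₂" => partialDeriv ((0 : ℝ), (1 : ℝ))

section General

variable {E F : Type*} [NormedAddCommGroup E] [NormedSpace ℝ E]
  [NormedAddCommGroup F] [NormedSpace ℝ F] {g h : E → F} {Ω : Set E}

theorem ContDiffOn.partialDeriv_of_isOpen {n : WithTop ℕ∞} (v : E) (hΩ : IsOpen Ω)
    (hg : ContDiffOn ℝ (n + 1) g Ω) : ContDiffOn ℝ n (partialDeriv v g) Ω :=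
  (ContinuousLinearMap.apply ℝ F v).contDiff.comp_contDiffOn (hg.fderiv_of_isOpen hΩ le_rfl)

theorem ContDiffOn.differentiableAt_partialDeriv {p : E} (v : E) (hΩ : IsOpen Ω)
    (hg : ContDiffOn ℝ 2 g Ω) (hp : p ∈ Ω) : DifferentiableAt ℝ (partialDeriv v g) p :=
  ((hg.partialDeriv_of_isOpen (n := 1) v hΩ).differentiableOn one_ne_zero).differentiableAt
    (hΩ.mem_nhds hp)

theorem Set.EqOn.partialDeriv (v : E) (hΩ : IsOpen Ω) (hgh : EqOn g h Ω) :
    EqOn (partialDeriv v g) (partialDeriv v h) Ω := fun _ hp => by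
  simp only [_root_.partialDeriv, (hgh.eventuallyEq_of_mem (hΩ.mem_nhds hp)).fderiv_eq]

theorem ContDiffAt.partialDeriv_comm {p : E} (hg : ContDiffAt ℝ 2 g p) (v w : E) :
    partialDeriv v (partialDeriv w g) p = partialDeriv w (partialDeriv v g) p := by
  have hd : DifferentiableAt ℝ (fderiv ℝ g) p :=
    (hg.fderiv_right (m := 1) le_rfl).differentiableAt one_ne_zero
  have key : ∀ u u' : E, partialDeriv u (partialDeriv u' g) p = fderiv ℝ (fderiv ℝ g) p u u' :=
    fun u u' => by
      change fderiv ℝ (fun q => fderiv ℝ g q u') p u = _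
      rw [fderiv_clm_apply hd (differentiableAt_const u')]
      simp
  rw [key, key]
  exact (hg.isSymmSndFDerivAt (by simp)).eq v w

theorem ContDiffOn.partialDeriv_comm (hΩ : IsOpen Ω) (hg : ContDiffOn ℝ 2 g Ω) (v w : E) :
    EqOn (partialDeriv v (partialDeriv w g)) (partialDeriv w (partialDeriv v g)) Ω :=
  fun _ hp => (hg.contDiffAt (hΩ.mem_nhds hp)).partialDeriv_comm v w

end General

section Plane

variable {F : Type*} [NormedAddCommGroup F] [NormedSpace ℝ F] {g : ℝ × ℝ → F}
  {Ω : Set (ℝ × ℝ)} {R r : ℝ}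

theorem DifferentiableAt.hasDerivAt_slice_fst (hg : DifferentiableAt ℝ g (R, r)) :
    HasDerivAt (fun s => g (s, r)) (∂₁ g (R, r)) R :=
  hg.hasFDerivAt.comp_hasDerivAt R ((hasDerivAt_id R).prodMk (hasDerivAt_const R r))

theorem DifferentiableAt.hasDerivAt_slice_snd (hg : DifferentiableAt ℝ g (R, r)) :
    HasDerivAt (fun s => g (R, s)) (∂₂ g (R, r)) r :=
  hg.hasFDerivAt.comp_hasDerivAt r ((hasDerivAt_const r R).prodMk (hasDerivAt_id r))

theorem DifferentiableAt.hasDerivAt_diag (hg : DifferentiableAt ℝ g (R, R)) :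
    HasDerivAt (fun s => g (s, s)) (∂₁ g (R, R) + ∂₂ g (R, R)) R := by
  have h := hg.hasFDerivAt.comp_hasDerivAt (f := fun s : ℝ => (s, s)) R
    ((hasDerivAt_id R).prodMk (hasDerivAt_id R))
  rwa [show ((1 : ℝ), (1 : ℝ)) = (1, 0) + (0, 1) by simp, map_add] at h

theorem partialDeriv_fst_eq_neg_snd_of_diag {c : F} (hg : DifferentiableAt ℝ g (R, R))
    (hc : (fun s => g (s, s)) =ᶠ[𝓝 R] fun _ => c) : ∂₁ g (R, R) = -∂₂ g (R, R) :=
  eq_neg_of_add_eq_zero_left <|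
    hg.hasDerivAt_diag.unique ((hasDerivAt_const R c).congr_of_eventuallyEq hc)

theorem partialDeriv_snd_fst_eq_neg_of_diag {c : F} (hΩ : IsOpen Ω) (hg : ContDiffOn ℝ 2 g Ω)
    (hp : (R, R) ∈ Ω) (hc : (fun s => ∂₂ g (s, s)) =ᶠ[𝓝 R] fun _ => c) :
    ∂₂ (∂₁ g) (R, R) = -∂₂ (∂₂ g) (R, R) := by
  rw [hg.partialDeriv_comm hΩ _ _ hp]
  exact partialDeriv_fst_eq_neg_snd_of_diag (hg.differentiableAt_partialDeriv _ hΩ hp) hc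

theorem IsOpen.eventually_mem_slice_fst (hΩ : IsOpen Ω) (hp : (R, r) ∈ Ω) :
    ∀ᶠ s in 𝓝 R, (s, r) ∈ Ω :=
  (continuousAt_id.prodMk continuousAt_const).preimage_mem_nhds (hΩ.mem_nhds hp)

theorem IsOpen.eventually_mem_slice_snd (hΩ : IsOpen Ω) (hp : (R, r) ∈ Ω) :
    ∀ᶠ s in 𝓝 r, (R, s) ∈ Ω :=
  (continuousAt_const.prodMk continuousAt_id).preimage_mem_nhds (hΩ.mem_nhds hp)

theorem deriv_deriv_slice_snd (hΩ : IsOpen Ω) (hg : ContDiffOn ℝ 2 g Ω) (hp : (R, r) ∈ Ω) :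
    deriv (deriv fun s => g (R, s)) r = ∂₂ (∂₂ g) (R, r) := by
  refine ((hg.differentiableAt_partialDeriv _ hΩ hp).hasDerivAt_slice_snd.congr_of_eventuallyEq
    ?_).deriv
  filter_upwards [hΩ.eventually_mem_slice_snd hp] with s hs
  exact ((hg.differentiableOn two_ne_zero).differentiableAt
    (hΩ.mem_nhds hs)).hasDerivAt_slice_snd.deriv

theorem hasDerivAt_deriv_slice_fst (hΩ : IsOpen Ω) (hg : ContDiffOn ℝ 2 g Ω) (hp : (R, r) ∈ Ω) :
    HasDerivAt (fun s => deriv (fun R' => g (R', s)) R) (∂₂ (∂₁ g) (R, r)) r := by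
  refine (hg.differentiableAt_partialDeriv _ hΩ hp).hasDerivAt_slice_snd.congr_of_eventuallyEq ?_
  filter_upwards [hΩ.eventually_mem_slice_snd hp] with s hs
  exact ((hg.differentiableOn two_ne_zero).differentiableAt
    (hΩ.mem_nhds hs)).hasDerivAt_slice_fst.deriv

end Plane

theorem linearized_eq_partialDeriv_fst {U : ℝ × ℝ → ℝ} {Ω : Set (ℝ × ℝ)} {f : ℝ → ℝ}
    (α β : ℝ → ℝ) (hΩ : IsOpen Ω) (hU : ContDiffOn ℝ 3 U Ω) (hf : Differentiable ℝ f)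
    (hODE : ∀ p ∈ Ω, α p.2 * ∂₂ (∂₂ U) p + β p.2 * ∂₂ U p + f (U p) = 0)
    {p : ℝ × ℝ} (hp : p ∈ Ω) :
    α p.2 * ∂₂ (∂₂ (∂₁ U)) p + β p.2 * ∂₂ (∂₁ U) p + deriv f (U p) * ∂₁ U p = 0 := by
  obtain ⟨R, r⟩ := p
  have hU2 : ContDiffOn ℝ 2 (∂₂ U) Ω := hU.partialDeriv_of_isOpen _ hΩ
  have hU1 : ContDiffOn ℝ 1 (∂₂ (∂₂ U)) Ω := hU2.partialDeriv_of_isOpen _ hΩ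
  have hdiff {g : ℝ × ℝ → ℝ} {n : WithTop ℕ∞} (hg : ContDiffOn ℝ n g Ω) (hn : n ≠ 0) :
      DifferentiableAt ℝ g (R, r) :=
    (hg.differentiableOn hn).differentiableAt (hΩ.mem_nhds hp)
  have hderiv : HasDerivAt (fun s => α r * ∂₂ (∂₂ U) (s, r) + β r * ∂₂ U (s, r) + f (U (s, r)))
      (α r * ∂₁ (∂₂ (∂₂ U)) (R, r) + β r * ∂₁ (∂₂ U) (R, r)
        + deriv f (U (R, r)) * ∂₁ U (R, r)) R :=
    (((hdiff hU1 one_ne_zero).hasDerivAt_slice_fst.const_mul _).add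
      ((hdiff hU2 two_ne_zero).hasDerivAt_slice_fst.const_mul _)).add
      ((hf _).hasDerivAt.comp R (hdiff hU three_ne_zero).hasDerivAt_slice_fst)
  have hconst : HasDerivAt (fun s => α r * ∂₂ (∂₂ U) (s, r) + β r * ∂₂ U (s, r) + f (U (s, r)))
      0 R := by
    refine (hasDerivAt_const R 0).congr_of_eventuallyEq ?_
    filter_upwards [hΩ.eventually_mem_slice_fst hp] with s hs
    exact hODE _ hs
  have hmixed : EqOn (∂₁ (∂₂ U)) (∂₂ (∂₁ U)) Ω :=
    (hU.of_le (by norm_num)).partialDeriv_comm hΩ _ _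
  rw [← hmixed hp, ← hmixed.partialDeriv _ hΩ hp, ← hU2.partialDeriv_comm hΩ _ _ hp]
  exact hderiv.unique hconst

theorem stmt_16_general (f : ℝ → ℝ) (hf : ContDiff ℝ 1 f) (M : ℝ)
    (j₁ j₂ a b : ℝ)
    (hJI : Ioo j₁ j₂ ⊆ Ioo a b) (hI : Ioo a b ⊆ Ioo (-1 : ℝ) 1)
    (𝒰 : ℝ → ℝ → ℝ)
    (h𝒰 : ContDiffOn ℝ 3 (fun p : ℝ × ℝ => 𝒰 p.1 p.2) (Ioo j₁ j₂ ×ˢ Ioo a b))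
    (hODE : ∀ R ∈ Ioo j₁ j₂, ∀ r ∈ Ioo a b,
      (1 - r ^ 2) * deriv (deriv (𝒰 R)) r - 2 * r * deriv (𝒰 R) r + f (𝒰 R r) = 0)
    (hURR : ∀ R ∈ Ioo j₁ j₂, 𝒰 R R = M)
    (hU'RR : ∀ R ∈ Ioo j₁ j₂, deriv (𝒰 R) R = 0)
    (R₀ : ℝ) (hR₀ : R₀ ∈ Ioo j₁ j₂) :
    ∃ Z' Z'' : ℝ → ℝ,
      (∀ r ∈ Ioo a b, HasDerivAt (fun s => deriv (fun R => 𝒰 R s) R₀) (Z' r) r) ∧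
      (∀ r ∈ Ioo a b, HasDerivAt Z' (Z'' r) r) ∧
      (∀ r ∈ Ioo a b, (1 - r ^ 2) * Z'' r - 2 * r * Z' r
        + deriv f (𝒰 R₀ r) * deriv (fun R => 𝒰 R r) R₀ = 0) ∧
      deriv (fun R => 𝒰 R R₀) R₀ = 0 ∧
      Z' R₀ = f M / (1 - R₀ ^ 2) := by
  set U : ℝ × ℝ → ℝ := fun p => 𝒰 p.1 p.2
  set Ω := Ioo j₁ j₂ ×ˢ Ioo a b
  have hΩ : IsOpen Ω := isOpen_Ioo.prod isOpen_Ioo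
  have hU2 : ContDiffOn ℝ 2 U Ω := h𝒰.of_le (by norm_num)
  have hUd {p : ℝ × ℝ} (hp : p ∈ Ω) : DifferentiableAt ℝ U p :=
    (h𝒰.differentiableOn three_ne_zero).differentiableAt (hΩ.mem_nhds hp)
  have hODE' : ∀ p ∈ Ω, (1 - p.2 ^ 2) * ∂₂ (∂₂ U) p + (-2 * p.2) * ∂₂ U p + f (U p) = 0 := by
    rintro ⟨R, r⟩ hp
    rw [← deriv_deriv_slice_snd hΩ hU2 hp, ← (hUd hp).hasDerivAt_slice_snd.deriv]
    linarith [hODE R hp.1 r hp.2]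
  have hq : (R₀, R₀) ∈ Ω := ⟨hR₀, hJI hR₀⟩
  have hdiag : (fun s => U (s, s)) =ᶠ[𝓝 R₀] fun _ => M :=
    eventually_of_mem (isOpen_Ioo.mem_nhds hR₀) hURR
  have hdiag' : (fun s => ∂₂ U (s, s)) =ᶠ[𝓝 R₀] fun _ => 0 :=
    eventually_of_mem (isOpen_Ioo.mem_nhds hR₀) fun s hs =>
      (hUd ⟨hs, hJI hs⟩).hasDerivAt_slice_snd.deriv.symm.trans (hU'RR s hs)
  have hUr : ∂₂ U (R₀, R₀) = 0 := hdiag'.self_of_nhds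
  refine ⟨fun r => ∂₂ (∂₁ U) (R₀, r), fun r => ∂₂ (∂₂ (∂₁ U)) (R₀, r),
    fun r hr => hasDerivAt_deriv_slice_fst hΩ hU2 ⟨hR₀, hr⟩,
    fun r hr => ((h𝒰.partialDeriv_of_isOpen (n := 2) _ hΩ).differentiableAt_partialDeriv _ hΩ
      ⟨hR₀, hr⟩).hasDerivAt_slice_snd,
    fun r hr => ?_, ?_, ?_⟩
  · rw [(hUd ⟨hR₀, hr⟩).hasDerivAt_slice_fst.deriv]
    linarith [linearized_eq_partialDeriv_fst (fun r => 1 - r ^ 2) (fun r => -2 * r) hΩ h𝒰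
      (hf.differentiable one_ne_zero) hODE' (p := (R₀, r)) ⟨hR₀, hr⟩]
  · rw [(hUd hq).hasDerivAt_slice_fst.deriv, partialDeriv_fst_eq_neg_snd_of_diag (hUd hq) hdiag,
      hUr, neg_zero]
  · have hR₀I := hI (hJI hR₀)
    have hODE₀ := hODE' _ hq
    simp only [hUr, hdiag.self_of_nhds] at hODE₀
    change ∂₂ (∂₁ U) (R₀, R₀) = _
    rw [eq_div_iff (by nlinarith [hR₀I.1, hR₀I.2]),
      partialDeriv_snd_fst_eq_neg_of_diag hΩ hU2 hq hdiag']
    linarith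

/-- Let `f : ℝ → ℝ` be C¹ and `M > 0`. Let `J = (j₁,j₂)` be an open
interval, `I = (a,b) ⊆ (-1,1)` an open interval with `J ⊆ I`, and let `𝒰 : J × I → ℝ` be C³
such that for every `R ∈ J` the function `r ↦ 𝒰(R,r)` solves the model ODE
`(1-r²)·∂ᵣ²𝒰(R,r) - 2r·∂ᵣ𝒰(R,r) + f(𝒰(R,r)) = 0` on `I`, with `𝒰(R,R) = M` and
`∂ᵣ𝒰(R,R) = 0`. Fix `R₀ ∈ J` and define `Z(r) = ∂_R 𝒰(R,r)` evaluated at `R = R₀`. Then `Z`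
is a solution of the linearized equation
`(1-r²)·Z''(r) - 2r·Z'(r) + f'(𝒰(R₀,r))·Z(r) = 0` on `I`, with `Z(R₀) = 0` and
`Z'(R₀) = f(M)/(1-R₀²)`. -/
theorem stmt_16 (f : ℝ → ℝ) (hf : ContDiff ℝ 1 f) (M : ℝ) (hM : 0 < M)
    (j₁ j₂ a b : ℝ)
    (hJI : Ioo j₁ j₂ ⊆ Ioo a b) (hI : Ioo a b ⊆ Ioo (-1 : ℝ) 1)
    (𝒰 : ℝ → ℝ → ℝ)
    (h𝒰 : ContDiffOn ℝ 3 (fun p : ℝ × ℝ => 𝒰 p.1 p.2) (Ioo j₁ j₂ ×ˢ Ioo a b))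
    (hODE : ∀ R ∈ Ioo j₁ j₂, ∀ r ∈ Ioo a b,
      (1 - r ^ 2) * deriv (deriv (𝒰 R)) r - 2 * r * deriv (𝒰 R) r + f (𝒰 R r) = 0)
    (hURR : ∀ R ∈ Ioo j₁ j₂, 𝒰 R R = M)
    (hU'RR : ∀ R ∈ Ioo j₁ j₂, deriv (𝒰 R) R = 0)
    (R₀ : ℝ) (hR₀ : R₀ ∈ Ioo j₁ j₂) :
    ∃ Z' Z'' : ℝ → ℝ,
      (∀ r ∈ Ioo a b, HasDerivAt (fun s => deriv (fun R => 𝒰 R s) R₀) (Z' r) r) ∧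
      (∀ r ∈ Ioo a b, HasDerivAt Z' (Z'' r) r) ∧
      (∀ r ∈ Ioo a b, (1 - r ^ 2) * Z'' r - 2 * r * Z' r
        + deriv f (𝒰 R₀ r) * deriv (fun R => 𝒰 R r) R₀ = 0) ∧
      deriv (fun R => 𝒰 R R₀) R₀ = 0 ∧
      Z' R₀ = f M / (1 - R₀ ^ 2) :=
  stmt_16_general f hf M j₁ j₂ a b hJI hI 𝒰 h𝒰 hODE hURR hU'RR R₀ hR₀
end
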